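/- arXiv:1910.11766 — 8 statements merged into one kernel-verified Lean document; each statement's English description precedes it below -/
import Mathlib

section
/- Let ε₁,...,ε_{2p} ∈ {+1,-1} with ε_i = (-1)^{i+1}, let P₁,...,P_s be an ordered partition of {1,...,2p}, and set c_j = Σ_{i ∈ P_j ∪ ... ∪ P_s} (-1)^{i+1}. Suppose B ⊆ ℤ contains 0, does not contain ±1, and contains no two consecutive integers. Then the number of indices 1 ≤ j ≤ s with c_j ∈ B is at most p. -/
theorem stmt1 (p s : ℕ) (hp : 1 ≤ p) (hs : 1 ≤ s)
    (P : Fin s → Finset ℕ)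
    (hne : ∀ j, (P j).Nonempty)
    (hdisj : ∀ j j', j ≠ j' → Disjoint (P j) (P j'))
    (hunion : Finset.univ.biUnion P = Finset.Icc 1 (2 * p))
    (c : Fin s → ℤ)
    (hc : ∀ j, c j = ∑ j' ∈ Finset.univ.filter (fun j' => j ≤ j'),
      ∑ i ∈ P j', (-1 : ℤ) ^ (i + 1))
    (B : Set ℤ) (hB0 : (0 : ℤ) ∈ B) (hB1 : (1 : ℤ) ∉ B) (hBm1 : (-1 : ℤ) ∉ B)
    (hBcons : ∀ k : ℤ, ¬(k ∈ B ∧ k + 1 ∈ B)) :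
    {j : Fin s | c j ∈ B}.ncard ≤ p := by
  classical
  set step : ℕ → ℤ := fun k => if h : k < s then ∑ i ∈ P ⟨k, h⟩, (-1:ℤ)^(i+1) else 0 with hstep
  set w : ℕ → ℕ := fun k => if h : k < s then (P ⟨k, h⟩).card else 0 with hw
  set C : ℕ → ℤ := fun t => ∑ k ∈ Finset.Ico t s, step k with hC
  have hCs : C s = 0 := by simp [hC]
  -- c j = C j.val
  have hcc : ∀ j : Fin s, c j = C j.val := by
    intro j
    rw [hc j, hC]
    have h1 : ∑ j' ∈ Finset.univ.filter (fun j' : Fin s => j ≤ j'),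
        ∑ i ∈ P j', (-1 : ℤ) ^ (i + 1)
        = ∑ j' : Fin s, if j.val ≤ j'.val then step j'.val else 0 := by
      rw [Finset.sum_filter]
      refine Finset.sum_congr rfl fun j' _ => ?_
      simp only [Fin.le_def, hstep, j'.isLt, dif_pos, Fin.eta]
    rw [h1, Fin.sum_univ_eq_sum_range (fun k => if j.val ≤ k then step k else 0) s,
      ← Finset.sum_filter]
    have h2 : (Finset.range s).filter (fun i => j.val ≤ i) = Finset.Ico j.val s := by
      ext k
      simp only [Finset.mem_filter, Finset.mem_range, Finset.mem_Ico]
      omega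
    rw [h2]
  have habs : ∀ k, |step k| ≤ (w k : ℤ) := by
    intro k
    by_cases h : k < s
    · simp only [hstep, hw, dif_pos h]
      calc |∑ i ∈ P ⟨k, h⟩, (-1:ℤ)^(i+1)| ≤ ∑ i ∈ P ⟨k, h⟩, |(-1:ℤ)^(i+1)| :=
            Finset.abs_sum_le_sum_abs _ _
        _ = ∑ i ∈ P ⟨k, h⟩, 1 := by
            refine Finset.sum_congr rfl fun i _ => ?_
            rw [abs_pow, abs_neg, abs_one, one_pow]
        _ = ((P ⟨k, h⟩).card : ℤ) := by simp
    · simp [hstep, hw, h]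
  have hmod : ∀ k, step k % 2 = (w k : ℤ) % 2 := by
    intro k
    by_cases h : k < s
    · simp only [hstep, hw, dif_pos h]
      rw [Finset.sum_int_mod]
      have : ∀ i ∈ P ⟨k, h⟩, ((-1:ℤ)^(i+1)) % 2 = 1 := by
        intro i _
        rcases Nat.even_or_odd (i+1) with he | ho
        · rw [he.neg_one_pow]; decide
        · rw [ho.neg_one_pow]; decide
      rw [Finset.sum_congr rfl this]
      simp
    · simp [hstep, hw, h]
  -- key interval lemma
  have key : ∀ a b : ℕ, a < b → b ≤ s → C a ∈ B → C b ∈ B →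
      2 ≤ ∑ k ∈ Finset.Ico a b, w k := by
    intro a b hab hbs ha hb
    have hdiff : C a - C b = ∑ k ∈ Finset.Ico a b, step k := by
      simp only [hC]
      have := Finset.sum_Ico_consecutive step (le_of_lt hab) hbs
      linarith
    set W := ∑ k ∈ Finset.Ico a b, w k with hW
    have hWcast : (W : ℤ) = ∑ k ∈ Finset.Ico a b, (w k : ℤ) := by push_cast [hW]; rfl
    have hWabs : |C a - C b| ≤ (W : ℤ) := by
      rw [hdiff, hWcast]
      calc |∑ k ∈ Finset.Ico a b, step k| ≤ ∑ k ∈ Finset.Ico a b, |step k| :=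
            Finset.abs_sum_le_sum_abs _ _
        _ ≤ ∑ k ∈ Finset.Ico a b, (w k : ℤ) := Finset.sum_le_sum fun k _ => habs k
    have hWmod : (C a - C b) % 2 = (W : ℤ) % 2 := by
      rw [hdiff, hWcast]
      conv_lhs => rw [Finset.sum_int_mod]
      conv_rhs => rw [Finset.sum_int_mod]
      exact congrArg (· % 2) (Finset.sum_congr rfl fun k _ => hmod k)
    have hW1 : 1 ≤ W := by
      have ha' : a < s := lt_of_lt_of_le hab hbs
      have h1 : 1 ≤ w a := by
        simp only [hw, dif_pos ha']
        exact (hne _).card_pos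
      exact le_trans h1 (Finset.single_le_sum (fun _ _ => Nat.zero_le _)
        (Finset.mem_Ico.2 ⟨le_refl a, hab⟩))
    by_contra hcon
    push_neg at hcon
    have hWeq : W = 1 := by omega
    rw [hWeq] at hWabs hWmod
    rcases abs_le.1 hWabs with ⟨hl, hr⟩
    norm_num at hWmod hl hr
    have : C a - C b = 1 ∨ C a - C b = -1 := by omega
    rcases this with h | h
    · exact hBcons (C b) ⟨hb, by rw [show C b + 1 = C a by omega]; exact ha⟩
    · exact hBcons (C a) ⟨ha, by rw [show C a + 1 = C b by omega]; exact hb⟩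
  -- total weight
  have hsumw : ∑ k ∈ Finset.range s, w k = 2 * p := by
    have h1 : ∑ k ∈ Finset.range s, w k = ∑ j : Fin s, (P j).card := by
      rw [← Fin.sum_univ_eq_sum_range (fun k => w k) s]
      refine Finset.sum_congr rfl fun j _ => ?_
      simp [hw, j.isLt]
    rw [h1, ← Finset.card_biUnion (fun x _ y _ hxy => hdisj x y hxy), hunion]
    simp [Nat.card_Icc]
  -- the set as a finset
  have hset : {j : Fin s | c j ∈ B} = ↑(Finset.univ.filter fun j : Fin s => c j ∈ B) := by
    ext j; simp
  rw [hset, Set.ncard_coe_finset]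
  set T := Finset.univ.filter fun j : Fin s => c j ∈ B with hT
  set N : Fin s → ℕ := fun j => sInf {t | j.val < t ∧ t ≤ s ∧ C t ∈ B} with hN
  have hNmem : ∀ j : Fin s, j.val < N j ∧ N j ≤ s ∧ C (N j) ∈ B := by
    intro j
    have hne' : {t | j.val < t ∧ t ≤ s ∧ C t ∈ B}.Nonempty :=
      ⟨s, j.isLt, le_refl s, by rw [hCs]; exact hB0⟩
    exact Nat.sInf_mem hne'
  have hNle : ∀ j j' : Fin s, j' ∈ T → j < j' → N j ≤ j'.val := by
    intro j j' hj' hlt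
    apply Nat.sInf_le
    refine ⟨hlt, le_of_lt j'.isLt, ?_⟩
    rw [← hcc j']
    simpa [hT] using hj'
  have hdisj2 : (↑T : Set (Fin s)).PairwiseDisjoint (fun j => Finset.Ico j.val (N j)) := by
    intro j hj j' hj' hne''
    rcases lt_or_gt_of_ne hne'' with h | h
    · have h1 := hNle j j' (by simpa using hj') h
      rw [Function.onFun]
      apply Finset.disjoint_left.2
      intro k hk hk'
      rw [Finset.mem_Ico] at hk hk'
      omega
    · have h1 := hNle j' j (by simpa using hj) h
      rw [Function.onFun]
      apply Finset.disjoint_left.2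
      intro k hk hk'
      rw [Finset.mem_Ico] at hk hk'
      omega
  have hfinal : 2 * T.card ≤ 2 * p := by
    calc 2 * T.card = ∑ _j ∈ T, 2 := by rw [Finset.sum_const, smul_eq_mul, mul_comm]
      _ ≤ ∑ j ∈ T, ∑ k ∈ Finset.Ico j.val (N j), w k := by
          refine Finset.sum_le_sum fun j hj => ?_
          exact key j.val (N j) (hNmem j).1 (hNmem j).2.1
            (by rw [← hcc]; simpa [hT] using hj) (hNmem j).2.2
      _ = ∑ k ∈ T.biUnion (fun j => Finset.Ico j.val (N j)), w k :=
          (Finset.sum_biUnion hdisj2).symm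
      _ ≤ ∑ k ∈ Finset.range s, w k := by
          refine Finset.sum_le_sum_of_subset ?_
          intro k hk
          simp only [Finset.mem_biUnion] at hk
          obtain ⟨j, hj, hk⟩ := hk
          rw [Finset.mem_Ico] at hk
          exact Finset.mem_range.2 (lt_of_lt_of_le hk.2 (hNmem j).2.1)
      _ = 2 * p := hsumw
  omega
end

section
/- For integers m ≥ 0 and n, s ≥ 1, real δ > 0, and x = (x₁,...,x_s) ∈ ℂ^s, define f_{m,n,s}(x) = Σ_{m+1 ≤ ℓ₁ < ... < ℓ_s ≤ m+n} x₁^{ℓ₁}···x_s^{ℓ_s}. Let q be the maximum number of pairwise disjoint nonempty intervals I₁,...,I_q of consecutive integers in {1,...,s} with |1 - Π_{j∈I_r} x_j| < δ for all r, and let K = max(1, max_{1≤a≤s} Π_{j=a}^s |x_j|). Then |f_{m,n,s}(x)| ≤ K^{m+n+1} (2/δ)^s Σ_{r=0}^q (δn)^r / r!. -/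
/-!
Induct on the number `s` of variables, bounding `c · Σ_{a ≤ ℓ₁ < ⋯ < ℓ_s < b} z^ℓ` under two
invariants: every disjoint family of `δ`-close intervals of `z` has at most `q` members, and every
monomial `c · z^ℓ` with monotone exponents in `[a, b]` has norm at most `M`.

If `‖1 - z₁‖ ≥ δ`, multiply by `1 - z₁` and sum the geometric series in `ℓ₁`: what remains is the
difference of two sums in `s - 1` variables, one with `z₁` dropped and one with `z₁, z₂` merged
into `z₁z₂`. Both inherit the invariants (a close interval of the merged tuple pulls back to one of
`z`), so the bound for `s - 1` costs a factor `2/δ`. If `‖1 - z₁‖ < δ`, then `{1}` is itself a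
close interval, so families for the tail have at most `q - 1` members; summing the bound for the
inner sums over `ℓ₁` turns `Σ_{r < q} (δu)^r/r!` into a Riemann sum of its integral, which raises
the truncation order to `q` at the price of a factor `1/δ`.

For the theorem, `M = K^(m+n+1)`: peeling off `ℓ₁` copies of the full product and recursing on the
tail bounds `∏ |x_j|^{ℓ_j}` by `K^{max ℓ}`.
-/

open scoped Classical

open Finset

section Combinatorics

variable {R : Type*} [CommRing R] {s : ℕ}

noncomputable def increasingMonomialSum (z : Fin s → R) (a b : ℕ) : R :=
  ∑ ℓ ∈ (Fintype.piFinset fun _ : Fin s => Ico a b).filter StrictMono, ∏ j, z j ^ ℓ j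

theorem increasingMonomialSum_zero (z : Fin 0 → R) (a b : ℕ) :
    increasingMonomialSum z a b = 1 := by
  simp [increasingMonomialSum, filter_true_of_mem fun ℓ _ => Subsingleton.strictMono ℓ]

theorem increasingMonomialSum_succ (z : Fin (s + 1) → R) (a b : ℕ) :
    increasingMonomialSum z a b =
      ∑ t ∈ Ico a b, z 0 ^ t * increasingMonomialSum (Fin.tail z) (t + 1) b := by
  simp only [increasingMonomialSum, mul_sum]
  rw [sum_sigma']
  refine sum_nbij' (fun ℓ => ⟨ℓ 0, Fin.tail ℓ⟩) (fun p => Fin.cons p.1 p.2) ?_ ?_ ?_ ?_ ?_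
  · intro ℓ hℓ
    simp only [mem_filter, Fintype.mem_piFinset, mem_Ico] at hℓ
    have hℓ' := hℓ.2
    rw [← Fin.cons_self_tail ℓ, Fin.strictMono_cons] at hℓ'
    simp only [mem_sigma, mem_filter, Fintype.mem_piFinset, mem_Ico]
    exact ⟨hℓ.1 0, ⟨fun j => ⟨hℓ'.1 j, (hℓ.1 j.succ).2⟩, hℓ'.2⟩⟩
  · rintro ⟨t, ℓ⟩ hp
    simp only [mem_sigma, mem_filter, Fintype.mem_piFinset, mem_Ico] at hp
    simp only [mem_filter, Fintype.mem_piFinset, mem_Ico, Fin.strictMono_cons,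
      Fin.forall_fin_succ, Fin.cons_zero, Fin.cons_succ]
    exact ⟨⟨hp.1, fun j => ⟨by grind, (hp.2.1 j).2⟩⟩, fun j => (hp.2.1 j).1, hp.2.2⟩
  · intro ℓ _
    exact Fin.cons_self_tail ℓ
  · rintro ⟨t, ℓ⟩ _
    simp
  · intro ℓ _
    rw [Fin.prod_univ_succ]
    rfl

def mergeHead (z : Fin (s + 2) → R) : Fin (s + 1) → R :=
  Fin.cons (z 0 * z 1) (Fin.tail (Fin.tail z))

theorem one_sub_mul_increasingMonomialSum_one (z : Fin 1 → R) {a b : ℕ} (hab : a ≤ b) :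
    (1 - z 0) * increasingMonomialSum z a b = z 0 ^ a - z 0 ^ b := by
  simp only [increasingMonomialSum_succ, increasingMonomialSum_zero, mul_one]
  linear_combination -geom_sum_Ico_mul (z 0) hab

/-- The geometric sum over the first exponent `t ∈ [a, u)` leaves the boundary terms `t = a`
and `t = u`; the latter merges `z 0` and `z 1`. -/
theorem one_sub_mul_increasingMonomialSum_succ_succ (z : Fin (s + 2) → R) (a b : ℕ) :
    (1 - z 0) * increasingMonomialSum z a b =
      z 0 ^ a * increasingMonomialSum (Fin.tail z) (a + 1) b -
        increasingMonomialSum (mergeHead z) (a + 1) b := by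
  set G := fun u => increasingMonomialSum (Fin.tail (Fin.tail z)) (u + 1) b
  have hswap : increasingMonomialSum z a b =
      ∑ u ∈ Ico (a + 1) b, (∑ t ∈ Ico a u, z 0 ^ t) * (z 1 ^ u * G u) := by
    simp only [increasingMonomialSum_succ, mul_sum, sum_mul]
    refine sum_comm' fun t u => ?_
    simp only [mem_Ico]
    omega
  simp only [hswap, increasingMonomialSum_succ, mul_sum, ← sum_sub_distrib]
  refine sum_congr rfl fun u hu => ?_
  have hgeom := geom_sum_Ico_mul (z 0) (Nat.le_of_succ_le (mem_Ico.1 hu).1)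
  simp only [mergeHead, Fin.cons_zero, Fin.tail_cons]
  change _ = z 0 ^ a * (z 1 ^ u * G u) - (z 0 * z 1) ^ u * G u
  linear_combination (-(z 1 ^ u * G u)) * hgeom

end Combinatorics

section ExpPartialSum

noncomputable def expPartialSum (q : ℕ) (x : ℝ) : ℝ :=
  ∑ r ∈ range (q + 1), x ^ r / (r.factorial : ℝ)

theorem one_le_expPartialSum (q : ℕ) {x : ℝ} (hx : 0 ≤ x) : 1 ≤ expPartialSum q x := by
  rw [expPartialSum, sum_range_succ']
  simp only [pow_zero, Nat.factorial_zero, Nat.cast_one, div_one]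
  exact le_add_of_nonneg_left (sum_nonneg fun r _ => by positivity)

@[gcongr]
theorem expPartialSum_mono (q : ℕ) {x y : ℝ} (hx : 0 ≤ x) (hxy : x ≤ y) :
    expPartialSum q x ≤ expPartialSum q y :=
  sum_le_sum fun r _ => by gcongr

theorem sum_range_pow_le (r N : ℕ) :
    ∑ u ∈ range N, (u : ℝ) ^ r ≤ (N : ℝ) ^ (r + 1) / (r + 1) := by
  have hmono : MonotoneOn (fun x : ℝ => x ^ r) (Set.Icc 0 (0 + N)) :=
    fun x hx y _ hxy => pow_le_pow_left₀ hx.1 hxy r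
  simpa [integral_pow] using hmono.sum_le_integral

/-- Term by term, a Riemann sum of `∫₀^{δN} t^r/r! dt`. -/
theorem mul_sum_expPartialSum_le (q N : ℕ) {δ : ℝ} (hδ : 0 ≤ δ) :
    δ * ∑ u ∈ range N, expPartialSum q (δ * u) ≤ expPartialSum (q + 1) (δ * N) := by
  calc δ * ∑ u ∈ range N, expPartialSum q (δ * u)
      = ∑ r ∈ range (q + 1), δ ^ (r + 1) / r.factorial * ∑ u ∈ range N, (u : ℝ) ^ r := by
        simp only [expPartialSum, mul_sum]
        rw [sum_comm]
        refine sum_congr rfl fun r _ => sum_congr rfl fun u _ => ?_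
        ring
    _ ≤ ∑ r ∈ range (q + 1), δ ^ (r + 1) / r.factorial * ((N : ℝ) ^ (r + 1) / (r + 1)) := by
        gcongr with r
        exact sum_range_pow_le r N
    _ = ∑ r ∈ range (q + 1), (δ * N) ^ (r + 1) / (r + 1).factorial := by
        refine sum_congr rfl fun r _ => ?_
        push_cast [Nat.factorial_succ]
        field_simp
        ring
    _ ≤ expPartialSum (q + 1) (δ * N) := by
        rw [expPartialSum, sum_range_succ' _ (q + 1)]
        exact le_add_of_nonneg_right (by positivity)

end ExpPartialSum

section Packing

variable {α β : Type*} [DecidableEq β]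

def PackingLE (P : Finset α → Prop) (q : ℕ) : Prop :=
  ∀ T : Finset (Finset α), (∀ I ∈ T, P I) → (T : Set (Finset α)).PairwiseDisjoint id → #T ≤ q

variable {P : Finset α → Prop} {Q : Finset β → Prop} {q : ℕ}

theorem PackingLE.one_le (h : PackingLE P q) {I : Finset α} (hI : P I) : 1 ≤ q := by
  simpa using h {I} (by simpa using hI) (by simp)

theorem PackingLE.of_map (h : PackingLE Q q) {φ : Finset α → Finset β} (hφ : φ.Injective)
    (hdisj : ∀ I J, Disjoint I J → Disjoint (φ I) (φ J)) (hPQ : ∀ I, P I → Q (φ I)) :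
    PackingLE P q := by
  intro T hT hTd
  rw [← card_image_of_injective T hφ]
  refine h _ (forall_mem_image.2 fun I hI => hPQ I (hT I hI)) ?_
  rw [coe_image, hφ.injOn.pairwiseDisjoint_image]
  exact fun I hI J hJ hIJ => hdisj I J (hTd hI hJ hIJ)

theorem PackingLE.of_disjoint [DecidableEq α] (h : PackingLE P (q + 1)) {I₀ : Finset α}
    (hI₀ : P I₀) (hne : I₀.Nonempty) : PackingLE (fun I => P I ∧ Disjoint I₀ I) q := by
  intro T hT hTd
  have hnot : I₀ ∉ T := fun hI => hne.ne_empty (disjoint_self.1 (hT I₀ hI).2)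
  have := h (insert I₀ T) (forall_mem_insert _ _ _ |>.2 ⟨hI₀, fun I hI => (hT I hI).1⟩) <| by
    rw [coe_insert]
    exact hTd.insert fun J hJ _ => (hT J hJ).2
  rwa [card_insert_of_notMem hnot, add_le_add_iff_right] at this

end Packing

section CloseIntervals

variable {𝕜 : Type*} [NormedField 𝕜] {δ : ℝ} {q : ℕ}

def IsCloseInterval {ι : Type*} [Preorder ι] (z : ι → 𝕜) (δ : ℝ) (I : Finset ι) : Prop :=
  I.Nonempty ∧ (I : Set ι).OrdConnected ∧ ‖1 - ∏ j ∈ I, z j‖ < δ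

theorem Fin.ordConnected_image_succ {s : ℕ} {I : Set (Fin s)} (hI : I.OrdConnected) :
    (Fin.succ '' I).OrdConnected := by
  refine ⟨?_⟩
  rintro _ ⟨a, ha, rfl⟩ _ ⟨b, hb, rfl⟩ c ⟨hac, hcb⟩
  obtain ⟨c, rfl⟩ := Fin.exists_succ_eq.2 (Fin.succ_pos a |>.trans_le hac).ne'
  exact ⟨c, hI.out ha hb ⟨Fin.succ_le_succ_iff.1 hac, Fin.succ_le_succ_iff.1 hcb⟩, rfl⟩

section Tail

variable {s : ℕ} {z : Fin (s + 1) → 𝕜}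

theorem IsCloseInterval.map_succ {I : Finset (Fin s)} (h : IsCloseInterval (Fin.tail z) δ I) :
    IsCloseInterval z δ (I.map (Fin.succEmb s)) := by
  refine ⟨h.1.map, ?_, ?_⟩
  · rw [coe_map, Fin.coe_succEmb]
    exact Fin.ordConnected_image_succ h.2.1
  · rw [prod_map]
    exact h.2.2

theorem isCloseInterval_singleton_zero (hz : ‖1 - z 0‖ < δ) : IsCloseInterval z δ {0} :=
  ⟨singleton_nonempty 0, by rw [coe_singleton]; exact Set.ordConnected_singleton,
    by rwa [prod_singleton]⟩

theorem PackingLE.tail (h : PackingLE (IsCloseInterval z δ) q) :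
    PackingLE (IsCloseInterval (Fin.tail z) δ) q :=
  h.of_map (map_injective _) (fun _ _ => (disjoint_map _).2) fun _ hI => hI.map_succ

theorem PackingLE.tail_of_close (h : PackingLE (IsCloseInterval z δ) (q + 1))
    (hz : ‖1 - z 0‖ < δ) : PackingLE (IsCloseInterval (Fin.tail z) δ) q :=
  (h.of_disjoint (isCloseInterval_singleton_zero hz) (singleton_nonempty 0)).of_map
    (map_injective _) (fun _ _ => (disjoint_map _).2) fun _ hI =>
      ⟨hI.map_succ, disjoint_singleton_left.2 (by simp [Fin.succ_ne_zero])⟩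

end Tail

section Fibers

variable {ι κ : Type*} [Fintype ι] [DecidableEq κ]

def fiberProd {M : Type*} [CommMonoid M] (g : ι → κ) (z : ι → M) (i : κ) : M :=
  ∏ j with g j = i, z j

theorem prod_filter_mem_eq_prod_fiberProd {M : Type*} [CommMonoid M] (g : ι → κ) (z : ι → M)
    (I : Finset κ) : ∏ j with g j ∈ I, z j = ∏ i ∈ I, fiberProd g z i := by
  rw [← prod_fiberwise_of_maps_to (t := I) (g := g) fun j hj => (mem_filter.1 hj).2]
  refine prod_congr rfl fun i hi => prod_congr ?_ fun _ _ => rfl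
  ext j
  simp only [mem_filter, mem_univ, true_and, and_iff_right_iff_imp]
  rintro rfl
  exact hi

theorem prod_pow_comp_eq_prod_fiberProd_pow {M : Type*} [CommMonoid M] [Fintype κ]
    (g : ι → κ) (z : ι → M) (ℓ : κ → ℕ) :
    ∏ j, z j ^ ℓ (g j) = ∏ i, fiberProd g z i ^ ℓ i := by
  rw [← prod_fiberwise univ g fun j => z j ^ ℓ (g j)]
  refine prod_congr rfl fun i _ => ?_
  rw [fiberProd, ← prod_pow]
  exact prod_congr rfl fun j hj => by rw [(mem_filter.1 hj).2]

variable [Preorder ι] [Preorder κ] {g : ι → κ} {z : ι → 𝕜}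

theorem IsCloseInterval.preimage (hg : Monotone g) (hsurj : g.Surjective) {I : Finset κ}
    (h : IsCloseInterval (fiberProd g z) δ I) : IsCloseInterval z δ {j | g j ∈ I} := by
  refine ⟨?_, ?_, ?_⟩
  · obtain ⟨i, hi⟩ := h.1
    obtain ⟨j, rfl⟩ := hsurj i
    exact ⟨j, by simpa using hi⟩
  · rw [coe_filter_univ]
    exact h.2.1.preimage_mono hg
  · rw [prod_filter_mem_eq_prod_fiberProd]
    exact h.2.2

theorem PackingLE.fiberProd (hg : Monotone g) (hsurj : g.Surjective)
    (h : PackingLE (IsCloseInterval z δ) q) : PackingLE (IsCloseInterval (fiberProd g z) δ) q := by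
  refine h.of_map (φ := fun I => {j | g j ∈ I}) ?_ ?_ fun _ hI => hI.preimage hg hsurj
  · intro I J hIJ
    ext i
    obtain ⟨j, rfl⟩ := hsurj i
    simpa using congrArg (j ∈ ·) hIJ
  · exact fun I J hIJ => disjoint_filter.2 fun j _ hI hJ => disjoint_left.1 hIJ hI hJ

end Fibers

end CloseIntervals

section Bound

variable {𝕜 : Type*} [NormedField 𝕜] {M : ℝ}

def MonomialBound {ι : Type*} [Fintype ι] [Preorder ι] (M : ℝ) (c : 𝕜) (z : ι → 𝕜)
    (a b : ℕ) : Prop :=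
  ∀ ℓ : ι → ℕ, Monotone ℓ → (∀ j, a ≤ ℓ j ∧ ℓ j ≤ b) → ‖c * ∏ j, z j ^ ℓ j‖ ≤ M

namespace MonomialBound

variable {ι : Type*} [Fintype ι] [Preorder ι] {c : 𝕜} {z : ι → 𝕜} {a b : ℕ}

theorem mono (h : MonomialBound M c z a b) {a' b' : ℕ} (ha : a ≤ a') (hb : b' ≤ b) :
    MonomialBound M c z a' b' :=
  fun ℓ hℓ hab => h ℓ hℓ fun j => ⟨ha.trans (hab j).1, (hab j).2.trans hb⟩

theorem norm_le [IsEmpty ι] (h : MonomialBound M c z a b) : ‖c‖ ≤ M := by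
  simpa using h isEmptyElim (fun i => isEmptyElim i) isEmptyElim

theorem fiberProd {κ : Type*} [Fintype κ] [DecidableEq κ] [Preorder κ]
    (h : MonomialBound M c z a b) {g : ι → κ} (hg : Monotone g) :
    MonomialBound M c (fiberProd g z) a b := by
  intro ℓ hℓ hab
  rw [← prod_pow_comp_eq_prod_fiberProd_pow]
  exact h (ℓ ∘ g) (hℓ.comp hg) fun j => hab (g j)

theorem tail {s : ℕ} {z : Fin (s + 1) → 𝕜} (h : MonomialBound M c z a b) {t : ℕ} (hat : a ≤ t)
    (htb : t ≤ b) : MonomialBound M (c * z 0 ^ t) (Fin.tail z) t b := by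
  intro ℓ hℓ hab
  have hcons : Monotone (Fin.cons t ℓ : Fin (s + 1) → ℕ) := by
    rw [monotone_iff_forall_lt] at hℓ ⊢
    exact (Fin.liftFun_cons (· ≤ ·)).2 ⟨fun j => (hab j).1, hℓ⟩
  have := h _ hcons <| Fin.cases ⟨hat, htb⟩ fun j => ⟨hat.trans (hab j).1, (hab j).2⟩
  rwa [Fin.prod_univ_succ, Fin.cons_zero, ← mul_assoc] at this

end MonomialBound

section MergeHead

variable {s : ℕ}

theorem mergeHead_eq_fiberProd (z : Fin (s + 2) → 𝕜) :
    mergeHead z = fiberProd (Fin.predAbove 0) z := by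
  funext i
  refine Fin.cases ?_ (fun i => ?_) i <;>
    simp [mergeHead, fiberProd, prod_filter, Fin.prod_univ_succ, (Fin.succ_ne_zero _).symm,
      Fin.tail]

theorem PackingLE.mergeHead {z : Fin (s + 2) → 𝕜} {δ : ℝ} {q : ℕ}
    (h : PackingLE (IsCloseInterval z δ) q) : PackingLE (IsCloseInterval (mergeHead z) δ) q := by
  rw [mergeHead_eq_fiberProd]
  exact h.fiberProd (Fin.predAbove_right_monotone 0) fun i => ⟨i.succ, Fin.predAbove_zero_succ⟩

theorem MonomialBound.mergeHead {z : Fin (s + 2) → 𝕜} {c : 𝕜} {a b : ℕ}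
    (h : MonomialBound M c z a b) : MonomialBound M c (mergeHead z) a b := by
  rw [mergeHead_eq_fiberProd]
  exact h.fiberProd (Fin.predAbove_right_monotone 0)

end MergeHead

theorem norm_le_of_mul_eq_sub {δ B : ℝ} (hδ : 0 < δ) {y w u v : 𝕜} (hy : δ ≤ ‖y‖)
    (h : y * w = u - v) (hu : ‖u‖ ≤ B) (hv : ‖v‖ ≤ B) : ‖w‖ ≤ 2 / δ * B := by
  rw [div_mul_eq_mul_div, le_div_iff₀ hδ]
  calc ‖w‖ * δ ≤ ‖w‖ * ‖y‖ := by gcongr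
    _ = ‖u - v‖ := by rw [← h, norm_mul, mul_comm]
    _ ≤ 2 * B := by linarith [norm_sub_le u v]

theorem norm_mul_increasingMonomialSum_succ_le {s : ℕ} {δ C : ℝ} (hδ : 0 < δ) (hC : 0 ≤ C)
    {z : Fin (s + 1) → 𝕜} {c : 𝕜} {a b q : ℕ}
    (h : ∀ t ∈ Ico a b, ‖c * z 0 ^ t * increasingMonomialSum (Fin.tail z) (t + 1) b‖ ≤
      C * expPartialSum q (δ * (b - (t + 1) : ℕ))) :
    ‖c * increasingMonomialSum z a b‖ ≤ C / δ * expPartialSum (q + 1) (δ * (b - a : ℕ)) := by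
  have hreflect : ∑ t ∈ Ico a b, expPartialSum q (δ * (b - (t + 1) : ℕ)) =
      ∑ u ∈ range (b - a), expPartialSum q (δ * u) := by
    rw [sum_Ico_eq_sum_range, ← sum_range_reflect]
    refine sum_congr rfl fun u hu => ?_
    rw [mem_range] at hu
    congr 3
    omega
  rw [increasingMonomialSum_succ, mul_sum, div_mul_eq_mul_div, le_div_iff₀ hδ]
  calc ‖∑ t ∈ Ico a b, c * (z 0 ^ t * increasingMonomialSum (Fin.tail z) (t + 1) b)‖ * δ
      ≤ (∑ t ∈ Ico a b, C * expPartialSum q (δ * (b - (t + 1) : ℕ))) * δ := by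
        gcongr
        refine (norm_sum_le _ _).trans (sum_le_sum fun t ht => ?_)
        rw [← mul_assoc]
        exact h t ht
    _ = C * (δ * ∑ u ∈ range (b - a), expPartialSum q (δ * u)) := by
        rw [← mul_sum, hreflect]
        ring
    _ ≤ C * expPartialSum (q + 1) (δ * (b - a : ℕ)) := by
        gcongr
        exact mul_sum_expPartialSum_le q (b - a) hδ.le

theorem norm_mul_increasingMonomialSum_le {δ : ℝ} (hδ : 0 < δ) (hM : 0 ≤ M) {s : ℕ}
    (z : Fin s → 𝕜) (c : 𝕜) (a b q : ℕ) (hq : PackingLE (IsCloseInterval z δ) q)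
    (hc : MonomialBound M c z a b) :
    ‖c * increasingMonomialSum z a b‖ ≤ M * (2 / δ) ^ s * expPartialSum q (δ * (b - a : ℕ)) := by
  have hS : ∀ q n : ℕ, 1 ≤ expPartialSum q (δ * n) := fun q n =>
    one_le_expPartialSum q (by positivity)
  induction s generalizing c a q with
  | zero =>
    rw [increasingMonomialSum_zero, mul_one, pow_zero, mul_one]
    exact hc.norm_le.trans (le_mul_of_one_le_right hM (hS _ _))
  | succ s ih =>
    rcases le_or_gt b a with hba | hab
    · rw [increasingMonomialSum_succ, Ico_eq_empty_of_le hba, sum_empty, mul_zero, norm_zero]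
      have := hS q (b - a)
      positivity
    rcases le_or_gt δ ‖1 - z 0‖ with hfar | hclose
    · cases s with
      | zero =>
        refine (norm_le_of_mul_eq_sub hδ hfar
          (by linear_combination c * one_sub_mul_increasingMonomialSum_one z hab.le)
          (hc.tail le_rfl hab.le).norm_le (hc.tail hab.le le_rfl).norm_le).trans ?_
        calc 2 / δ * M = M * (2 / δ) ^ (0 + 1) * 1 := by ring
          _ ≤ _ := by gcongr; exact hS _ _
      | succ s =>
        have htail := ih (Fin.tail z) (c * z 0 ^ a) (a + 1) q hq.tail
          ((hc.tail le_rfl hab.le).mono a.le_succ le_rfl)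
        have hmerge := ih (mergeHead z) c (a + 1) q hq.mergeHead
          (hc.mergeHead.mono a.le_succ le_rfl)
        refine (norm_le_of_mul_eq_sub hδ hfar
          (by linear_combination c * one_sub_mul_increasingMonomialSum_succ_succ z a b)
          htail hmerge).trans ?_
        calc 2 / δ * (M * (2 / δ) ^ (s + 1) * expPartialSum q (δ * (b - (a + 1) : ℕ)))
            = M * (2 / δ) ^ (s + 2) * expPartialSum q (δ * (b - (a + 1) : ℕ)) := by ring
          _ ≤ _ := by gcongr; omega
    · obtain ⟨q, rfl⟩ := Nat.exists_eq_add_one.2 (hq.one_le (isCloseInterval_singleton_zero hclose))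
      refine (norm_mul_increasingMonomialSum_succ_le hδ (by positivity) fun t ht =>
        ih (Fin.tail z) (c * z 0 ^ t) (t + 1) q (hq.tail_of_close hclose)
          ((hc.tail (mem_Ico.1 ht).1 (mem_Ico.1 ht).2.le).mono t.le_succ le_rfl)).trans ?_
      have hfactor : M * (2 / δ) ^ s / δ ≤ M * (2 / δ) ^ (s + 1) := by
        rw [pow_succ, ← mul_assoc, div_eq_mul_one_div _ δ]
        gcongr
        norm_num
      exact mul_le_mul_of_nonneg_right hfactor (zero_le_one.trans (hS _ _))

end Bound

theorem prod_pow_le_pow_of_monotone {s : ℕ} {y : Fin s → ℝ} (hy : ∀ j, 0 ≤ y j) {K : ℝ}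
    (hK : 1 ≤ K) (htail : ∀ a, ∏ j ∈ Ici a, y j ≤ K) {ℓ : Fin s → ℕ} (hℓ : Monotone ℓ) {L : ℕ}
    (hL : ∀ j, ℓ j ≤ L) : ∏ j, y j ^ ℓ j ≤ K ^ L := by
  induction s generalizing L with
  | zero => simpa using one_le_pow₀ hK
  | succ s ih =>
    have hsplit : ∏ j, y j ^ ℓ j = (∏ j, y j) ^ ℓ 0 * ∏ j : Fin s, y j.succ ^ (ℓ j.succ - ℓ 0) :=
      calc ∏ j, y j ^ ℓ j = ∏ j, y j ^ ℓ 0 * y j ^ (ℓ j - ℓ 0) :=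
            prod_congr rfl fun j _ => by rw [← pow_add, Nat.add_sub_cancel' (hℓ (Fin.zero_le j))]
        _ = _ := by
            rw [prod_mul_distrib, prod_pow, Fin.prod_univ_succ (fun j => y j ^ (ℓ j - ℓ 0)),
              Nat.sub_self, pow_zero, one_mul]
    have hfull : ∏ j, y j ≤ K := by simpa using htail 0
    have hrest := ih (fun j => hy j.succ)
      (fun a => by simpa [← Fin.map_succEmb_Ici] using htail a.succ)
      (ℓ := fun j => ℓ j.succ - ℓ 0)
      (fun i j hij => Nat.sub_le_sub_right (hℓ (Fin.succ_le_succ_iff.2 hij)) _)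
      (L := L - ℓ 0) fun j => Nat.sub_le_sub_right (hL j.succ) _
    calc ∏ j, y j ^ ℓ j ≤ K ^ ℓ 0 * K ^ (L - ℓ 0) := by
          rw [hsplit]
          gcongr
          · exact prod_nonneg fun j _ => pow_nonneg (hy _) _
          · exact prod_nonneg fun j _ => hy _
      _ = K ^ L := by rw [← pow_add, Nat.add_sub_cancel' (hL 0)]

theorem stmt2_general (m n s : ℕ) (δ : ℝ) (hδ : 0 < δ)
    (x : Fin s → ℂ) (q : ℕ) (K : ℝ)
    -- q bounds the cardinality of any family of pairwise disjoint nonempty intervals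
    -- of consecutive integers I ⊆ {1,...,s} with |1 - ∏_{j ∈ I} x j| < δ
    (hq : ∀ T : Finset (Finset (Fin s)),
      (∀ I ∈ T, I.Nonempty) →
      (∀ I ∈ T, ∀ a ∈ I, ∀ b ∈ I, ∀ c : Fin s, a ≤ c → c ≤ b → c ∈ I) →
      (∀ I ∈ T, ∀ J ∈ T, I ≠ J → Disjoint I J) →
      (∀ I ∈ T, ‖1 - ∏ j ∈ I, x j‖ < δ) →
      T.card ≤ q)
    -- K is at least 1 and at least every tail product of the |x j|
    (hK1 : 1 ≤ K)
    (hKa : ∀ a : Fin s, ∏ j ∈ Finset.univ.filter (fun j => a ≤ j), ‖x j‖ ≤ K) :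
    ‖∑ ℓ ∈ (Fintype.piFinset fun _ : Fin s => Finset.Icc (m + 1) (m + n)).filter
        (fun ℓ => StrictMono ℓ), ∏ j, x j ^ ℓ j‖
      ≤ K ^ (m + n + 1) * (2 / δ) ^ s *
          ∑ r ∈ Finset.range (q + 1), (δ * n) ^ r / (r.factorial : ℝ) := by
  have hpacking : PackingLE (IsCloseInterval x δ) q := fun T hT hTd =>
    hq T (fun I hI => (hT I hI).1)
      (fun I hI a ha b hb c hac hcb => (hT I hI).2.1.out ha hb ⟨hac, hcb⟩)
      (fun I hI J hJ hIJ => hTd hI hJ hIJ) fun I hI => (hT I hI).2.2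
  have hmonomial : MonomialBound (K ^ (m + n + 1)) 1 x (m + 1) (m + n + 1) := by
    intro ℓ hℓ hab
    rw [one_mul, norm_prod]
    simp_rw [norm_pow]
    exact prod_pow_le_pow_of_monotone (fun j => norm_nonneg _) hK1
      (fun a => by rw [← filter_le_eq_Ici]; exact hKa a) hℓ fun j => (hab j).2
  have := norm_mul_increasingMonomialSum_le hδ (by positivity) x 1 (m + 1) (m + n + 1) q
    hpacking hmonomial
  rw [one_mul, show m + n + 1 - (m + 1) = n by omega] at this
  rwa [← Ico_add_one_right_eq_Icc]

theorem stmt2 (m n s : ℕ) (hn : 1 ≤ n) (hs : 1 ≤ s) (δ : ℝ) (hδ : 0 < δ)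
    (x : Fin s → ℂ) (q : ℕ) (K : ℝ)
    -- q bounds the cardinality of any family of pairwise disjoint nonempty intervals
    -- of consecutive integers I ⊆ {1,...,s} with |1 - ∏_{j ∈ I} x j| < δ
    (hq : ∀ T : Finset (Finset (Fin s)),
      (∀ I ∈ T, I.Nonempty) →
      (∀ I ∈ T, ∀ a ∈ I, ∀ b ∈ I, ∀ c : Fin s, a ≤ c → c ≤ b → c ∈ I) →
      (∀ I ∈ T, ∀ J ∈ T, I ≠ J → Disjoint I J) →
      (∀ I ∈ T, ‖1 - ∏ j ∈ I, x j‖ < δ) →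
      T.card ≤ q)
    -- K is at least 1 and at least every tail product of the |x j|
    (hK1 : 1 ≤ K)
    (hKa : ∀ a : Fin s, ∏ j ∈ Finset.univ.filter (fun j => a ≤ j), ‖x j‖ ≤ K) :
    ‖∑ ℓ ∈ (Fintype.piFinset fun _ : Fin s => Finset.Icc (m + 1) (m + n)).filter
        (fun ℓ => StrictMono ℓ), ∏ j, x j ^ ℓ j‖
      ≤ K ^ (m + n + 1) * (2 / δ) ^ s *
          ∑ r ∈ Finset.range (q + 1), (δ * n) ^ r / (r.factorial : ℝ) :=
  stmt2_general m n s δ hδ x q K hq hK1 hKa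
end

section
/- Let X₁ be a nondegenerate integer-valued random variable with characteristic function φ. Then there exist a real number c > 0 and a positive integer d such that 1 - |φ(2πx)| ≥ c·‖dx‖² for all x ∈ ℝ. -/
open MeasureTheory Real

/-- Distance from a real number to the nearest integer. -/
noncomputable def nint (x : ℝ) : ℝ := |x - round x|

/-!
A nondegenerate integer-valued law has two atoms `m ≠ n`, of masses `p, q > 0`. Splitting the
characteristic function into these two atoms and the rest gives
`|φ t| ≤ |p e^{itm} + q e^{itn}| + (1 - p - q)`, and since
`|p e^{iθ} + q|² = (p + q)² - 2pq(1 - cos θ)` this is at most `1 - pq/(p+q) · (1 - cos (t(m - n)))`.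
With `t = 2πx`, the bound `cos u ≤ 1 - 2u²/π²` on `[-π, π]` yields `1 - cos (2πy) ≥ 8‖y‖²`,
so `c = 8pq/(p+q)` and `d = |m - n|` work.
-/

lemma eight_mul_nint_sq_le_one_sub_cos (y : ℝ) : 8 * nint y ^ 2 ≤ 1 - cos (2 * π * y) := by
  set r := y - round y
  have hr : |2 * π * r| ≤ π := by
    rw [abs_mul, abs_of_pos two_pi_pos]
    nlinarith [abs_sub_round y, pi_pos]
  have hperiod : cos (2 * π * y) = cos (2 * π * r) := by
    rw [show 2 * π * y = 2 * π * r + (round y : ℤ) * (2 * π) by ring, cos_add_int_mul_two_pi]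
  have hquad := cos_le_one_sub_mul_cos_sq hr
  rw [nint, sq_abs, hperiod]
  field_simp at hquad
  nlinarith [pi_pos]

lemma norm_ofReal_mul_exp_add_ofReal_mul_exp_le {p q : ℝ} (hp : 0 ≤ p) (hq : 0 ≤ q) (α β : ℝ) :
    ‖(p : ℂ) * Complex.exp (α * Complex.I) + q * Complex.exp (β * Complex.I)‖ ≤
      p + q - p * q / (p + q) * (1 - cos (α - β)) := by
  rcases (add_nonneg hp hq).eq_or_lt with hpq | hpq
  · obtain ⟨rfl, rfl⟩ : p = 0 ∧ q = 0 := ⟨by linarith, by linarith⟩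
    simp
  have hsq : ‖(p : ℂ) * Complex.exp (α * Complex.I) + q * Complex.exp (β * Complex.I)‖ ^ 2 =
      (p + q) ^ 2 - 2 * p * q * (1 - cos (α - β)) := by
    rw [Complex.sq_norm, Complex.normSq_apply]
    simp only [Complex.add_re, Complex.add_im, Complex.mul_re, Complex.mul_im,
      Complex.ofReal_re, Complex.ofReal_im, Complex.exp_ofReal_mul_I_re,
      Complex.exp_ofReal_mul_I_im, cos_sub]
    linear_combination p ^ 2 * sin_sq_add_cos_sq α + q ^ 2 * sin_sq_add_cos_sq β
  -- `√(A² - 2pqv) ≤ A - pqv/A` with `A = p + q`, `v = 1 - cos (α - β)`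
  set u := p * q / (p + q) * (1 - cos (α - β))
  have hu : (p + q) * u = p * q * (1 - cos (α - β)) := by
    simp only [u]; field_simp
  have hu_le : u ≤ p + q := by
    nlinarith [sq_nonneg (p - q), cos_le_one (α - β), neg_one_le_cos (α - β), mul_nonneg hp hq]
  apply abs_le_of_sq_le_sq' _ (by linarith) |>.2
  nlinarith [sq_nonneg u]

lemma exists_mem_measure_singleton_pos {α : Type*} [MeasurableSpace α] {μ : Measure α}
    {s : Set α} (hs : s.Countable) (h : μ s ≠ 0) : ∃ x ∈ s, 0 < μ {x} := by
  contrapose! h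
  rw [← Set.biUnion_of_singleton s]
  exact (measure_biUnion_null_iff hs).2 fun x hx => nonpos_iff_eq_zero.1 (h x hx)

lemma exists_ne_measure_singleton_pos {α : Type*} [MeasurableSpace α] {μ : Measure α} [NeZero μ]
    {s : Set α} (hsc : s.Countable) (hμs : ∀ᵐ x ∂μ, x ∈ s) (hμ : ¬ ∃ r, ∀ᵐ x ∂μ, x = r) :
    ∃ a ∈ s, ∃ b ∈ s, a ≠ b ∧ 0 < μ {a} ∧ 0 < μ {b} := by
  have hs : μ s ≠ 0 := fun h => NeZero.ne μ <| Measure.measure_univ_eq_zero.1 <|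
    nonpos_iff_eq_zero.1 (h ▸ measure_mono_ae (hμs.mono fun x hx _ => hx))
  obtain ⟨a, ha, ha_pos⟩ := exists_mem_measure_singleton_pos hsc hs
  have hs_diff : μ (s \ {a}) ≠ 0 := by
    refine fun h => hμ ⟨a, ae_iff.2 <| nonpos_iff_eq_zero.1 ?_⟩
    exact h ▸ measure_mono_ae (hμs.mono fun x hx hxa => ⟨hx, hxa⟩)
  obtain ⟨b, ⟨hb, hba⟩, hb_pos⟩ :=
    exists_mem_measure_singleton_pos (hsc.mono Set.sdiff_subset) hs_diff
  exact ⟨a, ha, b, hb, Ne.symm hba, ha_pos, hb_pos⟩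

lemma norm_charFun_le_of_ne (ν : Measure ℝ) [IsFiniteMeasure ν] {a b : ℝ} (hab : a ≠ b) (t : ℝ) :
    ‖charFun ν t‖ ≤ ν.real Set.univ - ν.real {a} * ν.real {b} / (ν.real {a} + ν.real {b}) *
      (1 - cos (t * (a - b))) := by
  set f : ℝ → ℂ := fun x => Complex.exp (t * x * Complex.I)
  have hf_norm : ∀ x, ‖f x‖ = 1 := fun x => by
    simpa [f] using Complex.norm_exp_ofReal_mul_I (t * x)
  have hf : Integrable f ν :=
    (integrable_const (1 : ℝ)).mono' (by fun_prop) (ae_of_all _ fun x => (hf_norm x).le)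
  have hdisj : Disjoint ({a} : Set ℝ) {b} := Set.disjoint_singleton.2 hab
  have hpair_meas : MeasurableSet ({a, b} : Set ℝ) := (measurableSet_singleton b).insert a
  have hpair : ∫ x in {a, b}, f x ∂ν = ν.real {a} * f a + ν.real {b} * f b := by
    rw [← Set.singleton_union, setIntegral_union hdisj (measurableSet_singleton b) hf.integrableOn
      hf.integrableOn, integral_singleton, integral_singleton, Complex.real_smul, Complex.real_smul]
  have hrest : ‖∫ x in {a, b}ᶜ, f x ∂ν‖ ≤ ν.real Set.univ - ν.real {a} - ν.real {b} := by
    have hbound := norm_setIntegral_le_of_norm_le_const (measure_lt_top ν {a, b}ᶜ)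
      (C := 1) fun x _ => (hf_norm x).le
    have hpair_real : ν.real {a, b} = ν.real {a} + ν.real {b} := by
      rw [← Set.singleton_union, measureReal_union hdisj (measurableSet_singleton b)]
    rw [measureReal_compl hpair_meas, hpair_real] at hbound
    linarith
  have htwo := norm_ofReal_mul_exp_add_ofReal_mul_exp_le (measureReal_nonneg (μ := ν) (s := {a}))
    (measureReal_nonneg (μ := ν) (s := {b})) (t * a) (t * b)
  push_cast at htwo
  rw [← mul_sub] at htwo
  calc ‖charFun ν t‖ = ‖(ν.real {a} * f a + ν.real {b} * f b) + ∫ x in {a, b}ᶜ, f x ∂ν‖ := by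
        rw [charFun_apply_real, ← integral_add_compl hpair_meas hf, hpair]
    _ ≤ ‖ν.real {a} * f a + ν.real {b} * f b‖ + ‖∫ x in {a, b}ᶜ, f x ∂ν‖ := norm_add_le _ _
    _ ≤ _ := by linarith

lemma cos_two_pi_mul_natAbs_mul (k : ℤ) (x : ℝ) :
    cos (2 * π * (k.natAbs * x)) = cos (2 * π * x * k) := by
  rw [Nat.cast_natAbs, Int.cast_abs]
  rcases abs_choice (k : ℝ) with h | h <;> rw [h]
  · ring_nf
  · rw [← cos_neg]; ring_nf

theorem stmt5 {Ω : Type*} [MeasurableSpace Ω] (μ : Measure Ω) [IsProbabilityMeasure μ]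
    (X : Ω → ℝ) (hmeas : Measurable X)
    (hint : ∀ ω, ∃ k : ℤ, X ω = (k : ℝ))
    (hnondeg : ¬ ∃ r : ℝ, ∀ᵐ ω ∂μ, X ω = r)
    (φ : ℝ → ℂ)
    (hφ : ∀ t : ℝ, φ t = ∫ ω, Complex.exp (Complex.I * ((t * X ω : ℝ) : ℂ)) ∂μ) :
    ∃ c : ℝ, 0 < c ∧ ∃ d : ℕ, 0 < d ∧
      ∀ x : ℝ, c * nint ((d : ℝ) * x) ^ 2 ≤ 1 - ‖φ (2 * π * x)‖ := by
  set ν := μ.map X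
  have hX := hmeas.aemeasurable (μ := μ)
  have : IsProbabilityMeasure ν := Measure.isProbabilityMeasure_map hX
  have hφν : ∀ t, φ t = charFun ν t := fun t => by
    rw [hφ, charFun_apply_real, integral_map hX (by fun_prop)]
    congr with ω
    push_cast
    ring_nf
  have hν_int : ∀ᵐ y ∂ν, y ∈ Set.range (Int.cast : ℤ → ℝ) :=
    (ae_map_iff hX (Set.countable_range _).measurableSet).2 <|
      ae_of_all _ fun ω => (hint ω).imp fun _ => Eq.symm
  have hν_nondeg : ¬ ∃ r, ∀ᵐ y ∂ν, y = r :=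
    fun ⟨r, hr⟩ => hnondeg ⟨r, ae_of_ae_map hX hr⟩
  obtain ⟨_, ⟨m, rfl⟩, _, ⟨n, rfl⟩, hmn, hm, hn⟩ :=
    exists_ne_measure_singleton_pos (Set.countable_range _) hν_int hν_nondeg
  set p := ν.real {(m : ℝ)}
  set q := ν.real {(n : ℝ)}
  have hp : 0 < p := ENNReal.toReal_pos hm.ne' (measure_ne_top _ _)
  have hq : 0 < q := ENNReal.toReal_pos hn.ne' (measure_ne_top _ _)
  refine ⟨8 * (p * q / (p + q)), by positivity, (m - n).natAbs,
    Int.natAbs_pos.2 (sub_ne_zero.2 fun h => hmn (congrArg _ h)), fun x => ?_⟩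
  have hchar := norm_charFun_le_of_ne ν hmn (2 * π * x)
  rw [probReal_univ, ← Int.cast_sub, ← cos_two_pi_mul_natAbs_mul] at hchar
  have hcos := eight_mul_nint_sq_le_one_sub_cos ((m - n).natAbs * x)
  rw [hφν]
  calc 8 * (p * q / (p + q)) * nint ((m - n).natAbs * x) ^ 2
      = p * q / (p + q) * (8 * nint ((m - n).natAbs * x) ^ 2) := by ring
    _ ≤ p * q / (p + q) * (1 - cos (2 * π * ((m - n).natAbs * x))) := by gcongr
    _ ≤ 1 - ‖charFun ν (2 * π * x)‖ := by linarith
end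

section
/- Let X₁ be an integer-valued random variable with characteristic function φ, and let 0 < β < 2. Suppose there exist constants K, x₀ > 0 such that E(X₁² · 1_{|X₁| ≤ x}) ≥ K·x^{2-β} for all x ≥ x₀. Then there exist a real number c > 0 and a positive integer d such that 1 - |φ(2πx)| ≥ c·‖dx‖^β for all x ∈ ℝ. -/
/-!
Let `ρ` be the law of `X - X'` for an independent copy `X'`. Then
`F x = 1 - ‖φ (2πx)‖² = ∫ (1 - cos (2πxy)) dρ(y)` is continuous and nonnegative. The truncated
second moment of `ρ` inherits the growth `x ^ (2 - β)` from `X`, and `1 - cos θ ≥ 2θ²/π²` for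
`|θ| ≤ π`, so `F ε ≳ |ε| ^ β` near `0`. A zero of `F` forces `py ∈ ℤ` for `ρ`-a.e. `y`, so every
zero of `F` is a period of `F`; as `1` is a zero, the positive zeros are the multiples of a least
one, which is `1 / d`. After rescaling by `d`, `F` is `1`-periodic without zeros in `(0, 1)`, and
compactness handles the points away from the integers. Finally `1 - ‖φ‖ ≥ F / 2`.
-/

open MeasureTheory Real

open Function Set Filter

theorem exists_pos_mul_rpow_nint_le_of_periodic {G : ℝ → ℝ} {β c₀ δ : ℝ} (hG : Continuous G)
    (hper : Periodic G 1) (hpos : ∀ t ∈ Ioo (0 : ℝ) 1, 0 < G t) (hβ : 0 ≤ β) (hc₀ : 0 < c₀)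
    (hδ : 0 < δ) (hsmall : ∀ t, |t| ≤ δ → c₀ * |t| ^ β ≤ G t) :
    ∃ c, 0 < c ∧ ∀ t, c * nint t ^ β ≤ G t := by
  obtain ⟨m, hm, hmG⟩ := (isCompact_Icc (a := δ) (b := 1 - δ)).exists_forall_le'
    hG.continuousOn fun t ht => hpos t ⟨by linarith [ht.1], by linarith [ht.2]⟩
  refine ⟨min c₀ m, lt_min hc₀ hm, fun t => ?_⟩
  set s := t - round t
  have hGs : G t = G s := by simpa using (hper.sub_int_mul_eq (round t)).symm
  have hs : |s| ≤ 1 / 2 := abs_sub_round t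
  rw [hGs, nint]
  by_cases hsδ : |s| ≤ δ
  · calc min c₀ m * |s| ^ β ≤ c₀ * |s| ^ β := by gcongr; exact min_le_left _ _
      _ ≤ G s := hsmall s hsδ
  have hmGs : m ≤ G s := by
    rcases le_or_gt 0 s with hs0 | hs0
    · rw [abs_of_nonneg hs0] at hs hsδ
      exact hmG s ⟨by linarith, by linarith⟩
    · rw [abs_of_neg hs0] at hs hsδ
      rw [← hper s]
      exact hmG (s + 1) ⟨by linarith, by linarith⟩
  calc min c₀ m * |s| ^ β ≤ m * 1 :=
        mul_le_mul (min_le_right _ _) (rpow_le_one (abs_nonneg s) (by linarith) hβ)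
          (by positivity) hm.le
    _ ≤ G s := by rwa [mul_one]

theorem exists_isLeast_pos_of_isClosed {S : Set ℝ} {ε₀ : ℝ} (hS : IsClosed S) (hε₀ : 0 < ε₀)
    (hgap : ∀ z ∈ S, 0 < z → ε₀ ≤ z) (hne : ∃ z ∈ S, 0 < z) :
    ∃ a, IsLeast {z | 0 < z ∧ z ∈ S} a := by
  have hEq : {z | 0 < z ∧ z ∈ S} = S ∩ Ici ε₀ := by
    ext z
    exact ⟨fun ⟨hz0, hz⟩ => ⟨hz, hgap z hz hz0⟩, fun ⟨hz, hzε⟩ => ⟨hε₀.trans_le hzε, hz⟩⟩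
  obtain ⟨z, hz, hz0⟩ := hne
  rw [hEq]
  exact ⟨_, (hS.inter isClosed_Ici).isLeast_csInf ⟨z, hz, hgap z hz hz0⟩
    ⟨ε₀, fun _ hy => hy.2⟩⟩

theorem exists_nat_mul_eq_of_isLeast {F : ℝ → ℝ} {a z : ℝ} (hper : Periodic F a)
    (ha : IsLeast {z | 0 < z ∧ F z = 0} a) (hz : 0 ≤ z) (hFz : F z = 0) :
    ∃ n : ℕ, n * a = z := by
  have ha0 : 0 < a := ha.1.1
  set n := ⌊z / a⌋₊
  refine ⟨n, ?_⟩
  have hle : n * a ≤ z := by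
    have := Nat.floor_le (div_nonneg hz ha0.le)
    rwa [le_div_iff₀ ha0] at this
  have hlt : z - n * a < a := by
    have := Nat.lt_floor_add_one (z / a)
    rw [div_lt_iff₀ ha0] at this
    linarith
  by_contra hne
  have hr : 0 < z - n * a := sub_pos.2 (lt_of_le_of_ne hle hne)
  have hFr : F (z - n * a) = 0 := by rw [hper.sub_nat_mul_eq, hFz]
  exact absurd (ha.2 ⟨hr, hFr⟩) (not_le.2 hlt)

theorem exists_pos_mul_rpow_nint_mul_le {F : ℝ → ℝ} {β c₀ ε₀ : ℝ} (hF : Continuous F)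
    (hF0 : ∀ x, 0 ≤ F x) (hper : ∀ p, F p = 0 → Periodic F p) (hF1 : F 1 = 0) (hβ : 0 ≤ β)
    (hc₀ : 0 < c₀) (hε₀ : 0 < ε₀) (hsmall : ∀ ε, |ε| ≤ ε₀ → c₀ * |ε| ^ β ≤ F ε) :
    ∃ c, 0 < c ∧ ∃ d : ℕ, 0 < d ∧ ∀ x, c * nint (d * x) ^ β ≤ F x := by
  have hgap : ∀ z ∈ F ⁻¹' {0}, 0 < z → ε₀ ≤ z := by
    intro z hz hz0
    by_contra! hzε
    have := hsmall z (by rw [abs_of_pos hz0]; exact hzε.le)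
    rw [show F z = 0 from hz, abs_of_pos hz0] at this
    exact absurd this (not_le.2 (by positivity))
  obtain ⟨a, ha⟩ := exists_isLeast_pos_of_isClosed (isClosed_singleton.preimage hF) hε₀ hgap
    ⟨1, hF1, one_pos⟩
  have ha0 : 0 < a := ha.1.1
  have hpera : Periodic F a := hper a ha.1.2
  obtain ⟨d, hd⟩ := exists_nat_mul_eq_of_isLeast hpera ha zero_le_one hF1
  have hd0 : 0 < d := Nat.pos_of_ne_zero fun h => by simp [h] at hd
  have hGpos : ∀ t ∈ Ioo (0 : ℝ) 1, 0 < F (t * a) := fun t ht =>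
    lt_of_le_of_ne (hF0 _) fun h =>
      absurd (ha.2 ⟨mul_pos ht.1 ha0, h.symm⟩) (not_le.2 (by nlinarith [ht.2]))
  have hGsmall : ∀ t, |t| ≤ ε₀ / a → c₀ * a ^ β * |t| ^ β ≤ F (t * a) := by
    intro t ht
    rw [le_div_iff₀ ha0] at ht
    calc c₀ * a ^ β * |t| ^ β = c₀ * |t * a| ^ β := by
          rw [abs_mul, abs_of_pos ha0, mul_rpow (abs_nonneg t) ha0.le]; ring
      _ ≤ F (t * a) := hsmall _ (by rwa [abs_mul, abs_of_pos ha0])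
  obtain ⟨c, hc, hG⟩ := exists_pos_mul_rpow_nint_le_of_periodic (G := fun t => F (t * a))
    (by fun_prop) (fun t => by simpa [add_mul] using hpera (t * a)) hGpos hβ
    (by positivity) (div_pos hε₀ ha0) hGsmall
  refine ⟨c, hc, d, hd0, fun x => ?_⟩
  simpa [mul_comm (d : ℝ) x, mul_assoc, hd] using hG (d * x)

noncomputable def truncSq (u y : ℝ) : ℝ := if |y| ≤ u then y ^ 2 else 0

noncomputable def truncSecondMoment (ν : Measure ℝ) (u : ℝ) : ℝ := ∫ y, truncSq u y ∂ν

noncomputable def symmetrization (ν : Measure ℝ) : Measure ℝ := (ν.prod ν).map fun q => q.1 - q.2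

instance {ν : Measure ℝ} [IsProbabilityMeasure ν] : IsProbabilityMeasure (symmetrization ν) :=
  Measure.isProbabilityMeasure_map (by fun_prop)

theorem measurable_truncSq (u : ℝ) : Measurable (truncSq u) :=
  Measurable.ite (measurableSet_le (by fun_prop) measurable_const) (by fun_prop) measurable_const

theorem truncSq_le_sq_mul_indicator (u y : ℝ) :
    truncSq u y ≤ {y : ℝ | |y| ≤ u}.indicator (fun _ => u ^ 2) y := by
  by_cases h : |y| ≤ u
  · rw [truncSq, if_pos h, indicator_of_mem (show y ∈ {y : ℝ | |y| ≤ u} from h)]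
    exact sq_le_sq.2 (h.trans (le_abs_self u))
  · rw [truncSq, if_neg h, indicator_of_notMem (show y ∉ {y : ℝ | |y| ≤ u} from h)]

theorem integrable_truncSq_comp {α : Type*} [MeasurableSpace α] {μ : Measure α}
    [IsFiniteMeasure μ] {f : α → ℝ} (hf : Measurable f) (u : ℝ) :
    Integrable (fun a => truncSq u (f a)) μ := by
  refine Integrable.of_bound ((measurable_truncSq u).comp hf).aestronglyMeasurable (u ^ 2)
    (ae_of_all _ fun a => ?_)
  have hle := truncSq_le_sq_mul_indicator u (f a)
  have h0 : 0 ≤ truncSq u (f a) := by unfold truncSq; split_ifs <;> positivity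
  rw [norm_of_nonneg h0]
  refine hle.trans ?_
  by_cases h : f a ∈ {y : ℝ | |y| ≤ u} <;> simp [h, sq_nonneg]

theorem truncSecondMoment_le_mul_measureReal (ν : Measure ℝ) [IsFiniteMeasure ν] (u : ℝ) :
    truncSecondMoment ν u ≤ u ^ 2 * ν.real {y | |y| ≤ u} := by
  have hs : MeasurableSet {y : ℝ | |y| ≤ u} := measurableSet_le (by fun_prop) measurable_const
  calc truncSecondMoment ν u ≤ ∫ y, {y : ℝ | |y| ≤ u}.indicator (fun _ => u ^ 2) y ∂ν :=
        integral_mono (integrable_truncSq_comp measurable_id u)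
          ((integrable_const _).indicator hs) (truncSq_le_sq_mul_indicator u)
    _ = u ^ 2 * ν.real {y | |y| ≤ u} := by rw [integral_indicator_const _ hs, smul_eq_mul, mul_comm]

theorem truncSq_sub_ge (u M a b : ℝ) :
    (truncSq u a / 2 - M ^ 2) * {y : ℝ | |y| ≤ M}.indicator 1 b ≤ truncSq (u + M) (a - b) := by
  unfold truncSq
  by_cases hb : |b| ≤ M
  · rw [indicator_of_mem (show b ∈ {y : ℝ | |y| ≤ M} from hb), Pi.one_apply, mul_one]
    by_cases ha : |a| ≤ u
    · have hab : |a - b| ≤ u + M := (abs_sub _ _).trans (add_le_add ha hb)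
      have hb2 : b ^ 2 ≤ M ^ 2 := sq_le_sq.2 (hb.trans (le_abs_self M))
      simp only [ha, hab, if_true]
      nlinarith [sq_nonneg (a - 2 * b)]
    · simp only [ha, if_false]
      split_ifs <;> nlinarith [sq_nonneg (a - b), sq_nonneg M]
  · rw [indicator_of_notMem (show b ∉ {y : ℝ | |y| ≤ M} from hb), mul_zero]
    split_ifs <;> positivity

theorem truncSecondMoment_symmetrization_ge (ν : Measure ℝ) [IsProbabilityMeasure ν]
    (u M : ℝ) :
    (truncSecondMoment ν u / 2 - M ^ 2) * ν.real {y | |y| ≤ M} ≤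
      truncSecondMoment (symmetrization ν) (u + M) := by
  have hM : MeasurableSet {y : ℝ | |y| ≤ M} := measurableSet_le (by fun_prop) measurable_const
  have hint : Integrable (truncSq u) ν := integrable_truncSq_comp measurable_id u
  have hg : ∫ y, (truncSq u y / 2 - M ^ 2) ∂ν = truncSecondMoment ν u / 2 - M ^ 2 := by
    rw [integral_sub (hint.div_const 2) (integrable_const _), integral_div, integral_const,
      probReal_univ, one_smul, truncSecondMoment]
  rw [← hg, ← integral_indicator_one hM, ← integral_prod_mul, truncSecondMoment, symmetrization,
    integral_map (by fun_prop) (measurable_truncSq _).aestronglyMeasurable]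
  exact integral_mono ((hint.div_const 2).sub (integrable_const _) |>.mul_prod
      ((integrable_const 1).indicator hM))
    (integrable_truncSq_comp (by fun_prop) _) fun q => truncSq_sub_ge u M q.1 q.2

open Complex in
theorem charFun_symmetrization (ν : Measure ℝ) [SFinite ν] (t : ℝ) :
    charFun (symmetrization ν) t = (‖charFun ν t‖ ^ 2 : ℝ) := by
  have hexp : ∀ q : ℝ × ℝ, exp (t * (q.1 - q.2 : ℝ) * I) =
      exp (t * q.1 * I) * exp ((-t : ℝ) * q.2 * I) := by
    intro q
    rw [← Complex.exp_add]
    push_cast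
    ring_nf
  rw [charFun_apply_real, symmetrization, integral_map (by fun_prop) (by fun_prop)]
  simp_rw [hexp]
  rw [integral_prod_mul (fun x : ℝ => exp (t * x * I)) fun x : ℝ => exp ((-t : ℝ) * x * I),
    ← charFun_apply_real, ← charFun_apply_real, charFun_neg, mul_conj']
  push_cast
  rfl

theorem integrable_cos_mul (ρ : Measure ℝ) [IsFiniteMeasure ρ] (t : ℝ) :
    Integrable (fun y => cos (t * y)) ρ :=
  Integrable.of_bound (by fun_prop) 1 (ae_of_all _ fun y => abs_cos_le_one _)

theorem re_charFun_eq_integral_cos (ρ : Measure ℝ) [IsFiniteMeasure ρ] (t : ℝ) :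
    (charFun ρ t).re = ∫ y, cos (t * y) ∂ρ := by
  have hint : Integrable (fun y : ℝ => Complex.exp (t * y * Complex.I)) ρ :=
    Integrable.of_bound (by fun_prop) 1 (ae_of_all _ fun y => by
      rw [← Complex.ofReal_mul, Complex.norm_exp_ofReal_mul_I])
  rw [charFun_apply_real, ← RCLike.re_to_complex, ← integral_re hint]
  simp_rw [RCLike.re_to_complex, ← Complex.ofReal_mul, Complex.exp_ofReal_mul_I_re]

theorem re_one_sub_charFun_eq_integral (ρ : Measure ℝ) [IsProbabilityMeasure ρ] (t : ℝ) :
    (1 - charFun ρ t).re = ∫ y, (1 - cos (t * y)) ∂ρ := by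
  rw [Complex.sub_re, Complex.one_re, re_charFun_eq_integral_cos,
    integral_sub (integrable_const 1) (integrable_cos_mul ρ t), integral_const, probReal_univ,
    one_smul]

theorem re_one_sub_charFun_nonneg (ρ : Measure ℝ) [IsProbabilityMeasure ρ] (t : ℝ) :
    0 ≤ (1 - charFun ρ t).re := by
  rw [re_one_sub_charFun_eq_integral]
  exact integral_nonneg fun y => sub_nonneg.2 (cos_le_one _)

open Complex in
theorem periodic_charFun_of_re_eq_one {ρ : Measure ℝ} [IsProbabilityMeasure ρ] {s : ℝ}
    (hs : (charFun ρ s).re = 1) : Periodic (charFun ρ) s := by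
  have h0 : ∫ y, (1 - Real.cos (s * y)) ∂ρ = 0 := by
    rw [← re_one_sub_charFun_eq_integral, sub_re, one_re, hs, sub_self]
  have hae : ∀ᵐ y ∂ρ, Real.cos (s * y) = 1 := by
    filter_upwards [(integral_eq_zero_iff_of_nonneg (fun y => sub_nonneg.2 (Real.cos_le_one _))
      ((integrable_const 1).sub (integrable_cos_mul ρ s))).1 h0] with y hy
    have hy' : 1 - Real.cos (s * y) = 0 := hy
    linarith
  intro t
  simp_rw [charFun_apply_real]
  refine integral_congr_ae ?_
  filter_upwards [hae] with y hy
  obtain ⟨n, hn⟩ := (Real.cos_eq_one_iff _).1 hy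
  have : ((t + s : ℝ) : ℂ) * y * I = t * y * I + n * (2 * π * I) := by
    have hn' : (s : ℂ) * y = n * (2 * π) := by exact_mod_cast hn.symm
    push_cast
    linear_combination I * hn'
  rw [this, Complex.exp_add, exp_int_mul_two_pi_mul_I, mul_one]

open Complex in
theorem charFun_two_pi_eq_one {ν : Measure ℝ} [IsProbabilityMeasure ν]
    (hZ : ∀ᵐ y ∂ν, ∃ k : ℤ, y = (k : ℝ)) : charFun ν (2 * π) = 1 := by
  rw [charFun_apply_real]
  calc ∫ y, exp (↑(2 * π) * y * I) ∂ν = ∫ _, (1 : ℂ) ∂ν := by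
        refine integral_congr_ae ?_
        filter_upwards [hZ] with y ⟨k, hk⟩
        rw [hk, ← exp_int_mul_two_pi_mul_I k]
        push_cast
        ring_nf
    _ = 1 := by simp

theorem mul_sq_le_one_sub_cos {ε y : ℝ} (hy : |y| ≤ (2 * |ε|)⁻¹) :
    8 * ε ^ 2 * y ^ 2 ≤ 1 - cos (2 * π * ε * y) := by
  rcases eq_or_ne ε 0 with rfl | hε
  · simp
  have hε' : 0 < |ε| := abs_pos.2 hε
  have hθ : |2 * π * ε * y| ≤ π := by
    rw [abs_mul, abs_mul, abs_of_pos (by positivity : (0 : ℝ) < 2 * π)]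
    calc 2 * π * |ε| * |y| ≤ 2 * π * |ε| * (2 * |ε|)⁻¹ := by gcongr
      _ = π := by field_simp
  have := cos_le_one_sub_mul_cos_sq hθ
  have hπ : π ≠ 0 := pi_ne_zero
  calc 8 * ε ^ 2 * y ^ 2 = 2 / π ^ 2 * (2 * π * ε * y) ^ 2 := by field_simp; ring
    _ ≤ 1 - cos (2 * π * ε * y) := by linarith

theorem mul_truncSecondMoment_le_re_one_sub_charFun (ρ : Measure ℝ) [IsProbabilityMeasure ρ]
    (ε : ℝ) : 8 * ε ^ 2 * truncSecondMoment ρ (2 * |ε|)⁻¹ ≤ (1 - charFun ρ (2 * π * ε)).re := by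
  rw [re_one_sub_charFun_eq_integral, truncSecondMoment, ← integral_const_mul]
  refine integral_mono ((integrable_truncSq_comp measurable_id _).const_mul _)
    ((integrable_const 1).sub (integrable_cos_mul ρ _)) fun y => ?_
  simp only [truncSq]
  split_ifs with hy
  · simpa only [mul_assoc] using mul_sq_le_one_sub_cos hy
  · simpa using cos_le_one _

theorem exists_mul_rpow_le_truncSecondMoment_symmetrization {ν : Measure ℝ}
    [IsProbabilityMeasure ν] {β K x₀ : ℝ} (hβ2 : β < 2) (hK : 0 < K)
    (hmom : ∀ x, x₀ ≤ x → K * x ^ (2 - β) ≤ truncSecondMoment ν x) :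
    ∃ c, 0 < c ∧ ∃ T₀, ∀ T, T₀ ≤ T → c * T ^ (2 - β) ≤ truncSecondMoment (symmetrization ν) T := by
  set M := max x₀ 1
  have hM : 0 < M := lt_max_of_lt_right one_pos
  set p := ν.real {y | |y| ≤ M}
  have hp : 0 < p := by
    have h1 := (hmom M (le_max_left _ _)).trans (truncSecondMoment_le_mul_measureReal ν M)
    have h2 : 0 < K * M ^ (2 - β) := by positivity
    exact pos_of_mul_pos_right (h2.trans_le h1) (by positivity)
  obtain ⟨x₁, hx₁⟩ := eventually_atTop.1 <| (eventually_ge_atTop M).and <|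
    ((tendsto_rpow_atTop (by linarith : 0 < 2 - β)).const_mul_atTop hK).eventually_ge_atTop
      (4 * M ^ 2)
  refine ⟨K * p / (4 * 2 ^ (2 - β)), by positivity, 2 * max x₁ M, fun T hT => ?_⟩
  have hu : max x₁ M ≤ T - M := by linarith [le_max_right x₁ M]
  obtain ⟨huM, hu4⟩ := hx₁ (T - M) ((le_max_left _ _).trans hu)
  have hSu := hmom (T - M) ((le_max_left _ _).trans huM)
  calc K * p / (4 * 2 ^ (2 - β)) * T ^ (2 - β) = K * (T / 2) ^ (2 - β) / 4 * p := by
        rw [div_rpow (by linarith [hM]) zero_le_two]; ring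
    _ ≤ K * (T - M) ^ (2 - β) / 4 * p := by
        gcongr
        · linarith
        · linarith [le_max_right x₁ M]
    _ ≤ (truncSecondMoment ν (T - M) / 2 - M ^ 2) * p := by gcongr; linarith
    _ ≤ truncSecondMoment (symmetrization ν) T := by
        simpa using truncSecondMoment_symmetrization_ge ν (T - M) M

theorem exists_mul_rpow_le_re_one_sub_charFun {ρ : Measure ℝ} [IsProbabilityMeasure ρ]
    {β c T₀ : ℝ} (hβ : 0 < β) (hc : 0 < c)
    (hgrowth : ∀ T, T₀ ≤ T → c * T ^ (2 - β) ≤ truncSecondMoment ρ T) :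
    ∃ c₀, 0 < c₀ ∧ ∃ ε₀, 0 < ε₀ ∧
      ∀ ε, |ε| ≤ ε₀ → c₀ * |ε| ^ β ≤ (1 - charFun ρ (2 * π * ε)).re := by
  refine ⟨8 * 2 ^ (β - 2) * c, by positivity, (2 * max T₀ 1)⁻¹, by positivity, fun ε hε => ?_⟩
  rcases eq_or_ne ε 0 with rfl | hε0
  · rw [abs_zero, zero_rpow hβ.ne', mul_zero]
    exact re_one_sub_charFun_nonneg ρ _
  have hε' : 0 < |ε| := abs_pos.2 hε0
  have hT : T₀ ≤ (2 * |ε|)⁻¹ := by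
    have h2 : 2 * |ε| ≤ (max T₀ 1)⁻¹ := by rw [mul_inv] at hε; linarith
    calc T₀ ≤ max T₀ 1 := le_max_left _ _
      _ ≤ (2 * |ε|)⁻¹ := by rwa [le_inv_comm₀ (by positivity) (by positivity)]
  have hpow : ((2 * |ε|)⁻¹) ^ (2 - β) = 2 ^ (β - 2) * |ε| ^ β * (ε ^ 2)⁻¹ := by
    rw [inv_rpow (by positivity), ← rpow_neg (by positivity), neg_sub,
      mul_rpow zero_le_two hε'.le, rpow_sub hε', ← sq_abs ε, rpow_two]
    ring
  calc 8 * 2 ^ (β - 2) * c * |ε| ^ β = 8 * ε ^ 2 * (c * ((2 * |ε|)⁻¹) ^ (2 - β)) := by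
        rw [hpow]; field_simp
    _ ≤ 8 * ε ^ 2 * truncSecondMoment ρ (2 * |ε|)⁻¹ := by gcongr; exact hgrowth _ hT
    _ ≤ (1 - charFun ρ (2 * π * ε)).re := mul_truncSecondMoment_le_re_one_sub_charFun ρ ε

theorem exists_mul_rpow_nint_le_one_sub_norm_charFun {ν : Measure ℝ} [IsProbabilityMeasure ν]
    (hZ : ∀ᵐ y ∂ν, ∃ k : ℤ, y = (k : ℝ)) {β K x₀ : ℝ} (hβ0 : 0 < β) (hβ2 : β < 2) (hK : 0 < K)
    (hmom : ∀ x, x₀ ≤ x → K * x ^ (2 - β) ≤ truncSecondMoment ν x) :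
    ∃ c, 0 < c ∧ ∃ d : ℕ, 0 < d ∧ ∀ x, c * nint (d * x) ^ β ≤ 1 - ‖charFun ν (2 * π * x)‖ := by
  set F : ℝ → ℝ := fun x => (1 - charFun (symmetrization ν) (2 * π * x)).re
  have hF : ∀ x, F x = 1 - ‖charFun ν (2 * π * x)‖ ^ 2 := fun x => by
    simp only [F, charFun_symmetrization, Complex.sub_re, Complex.one_re, Complex.ofReal_re]
  have hper : ∀ p, F p = 0 → Periodic F p := fun p hp x => by
    have h1 : (charFun (symmetrization ν) (2 * π * p)).re = 1 := by
      simp only [F, Complex.sub_re, Complex.one_re] at hp; linarith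
    simp only [F, mul_add, periodic_charFun_of_re_eq_one h1 (2 * π * x)]
  have hF1 : F 1 = 0 := by rw [hF, mul_one, charFun_two_pi_eq_one hZ, norm_one]; norm_num
  obtain ⟨c₁, hc₁, T₀, hgrowth⟩ := exists_mul_rpow_le_truncSecondMoment_symmetrization hβ2 hK hmom
  obtain ⟨c₀, hc₀, ε₀, hε₀, hsmall⟩ := exists_mul_rpow_le_re_one_sub_charFun hβ0 hc₁ hgrowth
  obtain ⟨c, hc, d, hd, hcF⟩ := exists_pos_mul_rpow_nint_mul_le (by fun_prop)
    (fun x => re_one_sub_charFun_nonneg _ _) hper hF1 hβ0.le hc₀ hε₀ hsmall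
  refine ⟨c / 2, by positivity, d, hd, fun x => ?_⟩
  have h1 := norm_charFun_le_one (μ := ν) (2 * π * x)
  have h2 := (hcF x).trans_eq (hF x)
  nlinarith [norm_nonneg (charFun ν (2 * π * x))]

theorem stmt6_general {Ω : Type*} [MeasurableSpace Ω] (μ : Measure Ω) [IsProbabilityMeasure μ]
    (X : Ω → ℝ) (hmeas : Measurable X)
    (hint : ∀ ω, ∃ k : ℤ, X ω = (k : ℝ))
    (φ : ℝ → ℂ)
    (hφ : ∀ t : ℝ, φ t = ∫ ω, Complex.exp (Complex.I * ((t * X ω : ℝ) : ℂ)) ∂μ)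
    (β : ℝ) (hβ0 : 0 < β) (hβ2 : β < 2)
    (K x₀ : ℝ) (hK : 0 < K)
    (hmom : ∀ x : ℝ, x₀ ≤ x →
      K * x ^ (2 - β) ≤ ∫ ω, (if |X ω| ≤ x then (X ω) ^ 2 else 0) ∂μ) :
    ∃ c : ℝ, 0 < c ∧ ∃ d : ℕ, 0 < d ∧
      ∀ x : ℝ, c * nint ((d : ℝ) * x) ^ β ≤ 1 - ‖φ (2 * π * x)‖ := by
  have := Measure.isProbabilityMeasure_map (μ := μ) hmeas.aemeasurable
  have hφν : ∀ t, φ t = charFun (μ.map X) t := fun t => by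
    rw [hφ, charFun_apply_real, integral_map hmeas.aemeasurable (by fun_prop)]
    simp_rw [Complex.ofReal_mul, mul_comm Complex.I]
  have hZ : ∀ᵐ y ∂(μ.map X), ∃ k : ℤ, y = (k : ℝ) := by
    have : ∀ᵐ y ∂(μ.map X), y ∈ Set.range ((↑) : ℤ → ℝ) :=
      (ae_map_iff hmeas.aemeasurable (Set.countable_range _).measurableSet).2
        (ae_of_all _ fun ω => (hint ω).imp fun _ => Eq.symm)
    exact this.mono fun y ⟨k, hk⟩ => ⟨k, hk.symm⟩
  have hmomν : ∀ x, x₀ ≤ x → K * x ^ (2 - β) ≤ truncSecondMoment (μ.map X) x := fun x hx => by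
    rw [truncSecondMoment, integral_map hmeas.aemeasurable
      (measurable_truncSq x).aestronglyMeasurable]
    exact hmom x hx
  simpa only [hφν] using exists_mul_rpow_nint_le_one_sub_norm_charFun hZ hβ0 hβ2 hK hmomν

theorem stmt6 {Ω : Type*} [MeasurableSpace Ω] (μ : Measure Ω) [IsProbabilityMeasure μ]
    (X : Ω → ℝ) (hmeas : Measurable X)
    (hint : ∀ ω, ∃ k : ℤ, X ω = (k : ℝ))
    (φ : ℝ → ℂ)
    (hφ : ∀ t : ℝ, φ t = ∫ ω, Complex.exp (Complex.I * ((t * X ω : ℝ) : ℂ)) ∂μ)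
    (β : ℝ) (hβ0 : 0 < β) (hβ2 : β < 2)
    (K x₀ : ℝ) (hK : 0 < K) (hx₀ : 0 < x₀)
    (hmom : ∀ x : ℝ, x₀ ≤ x →
      K * x ^ (2 - β) ≤ ∫ ω, (if |X ω| ≤ x then (X ω) ^ 2 else 0) ∂μ) :
    ∃ c : ℝ, 0 < c ∧ ∃ d : ℕ, 0 < d ∧
      ∀ x : ℝ, c * nint ((d : ℝ) * x) ^ β ≤ 1 - ‖φ (2 * π * x)‖ :=
  stmt6_general μ X hmeas hint φ hφ β hβ0 hβ2 K x₀ hK hmom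
end

section
/- Let X₁ be an integer-valued random variable with E|X₁| < 2·P(X₁ = 1), and let φ be its characteristic function. Then for all x, y ∈ ℝ, |φ(2πx) - φ(2πy)| ≥ (8·P(X₁=1) - 4·E|X₁|)·‖x - y‖. -/
/-!
Write `D = e^{ia} - e^{ib}`. For an integer `k`, `‖e^{ika} - e^{ikb}‖ = 2 |sin (k (a - b) / 2)|`,
which is at most `|k| ‖D‖`. Splitting `E[e^{iaX} - e^{ibX}]` at the atom `{X = 1}` therefore gives
`‖φ a - φ b‖ ≥ P(X = 1) ‖D‖ - (E|X| - P(X = 1)) ‖D‖`. For `a = 2πx`, `b = 2πy` Jordan's inequality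
`|sin (π h)| ≥ 2 nint h` bounds `‖D‖` below by `4 nint (x - y)`.
-/

open MeasureTheory Real

open Complex

theorem norm_cexp_I_mul_sub_cexp_I_mul (a b : ℝ) :
    ‖cexp (I * a) - cexp (I * b)‖ = 2 * |Real.sin ((a - b) / 2)| := by
  have h : cexp (I * a) - cexp (I * b) = cexp (I * b) * (cexp (I * ↑(a - b)) - 1) := by
    rw [mul_sub, mul_one, ← Complex.exp_add]
    push_cast
    ring_nf
  rw [h, norm_mul, norm_exp_I_mul_ofReal, one_mul, norm_exp_I_mul_ofReal_sub_one, norm_mul,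
    Real.norm_eq_abs, Real.norm_eq_abs, abs_two]

theorem abs_sin_nat_mul_le (n : ℕ) (x : ℝ) : |Real.sin (n * x)| ≤ n * |Real.sin x| := by
  induction n with
  | zero => simp
  | succ n ih =>
    calc |Real.sin ((n + 1 : ℕ) * x)|
        = |Real.sin (n * x) * Real.cos x + Real.cos (n * x) * Real.sin x| := by
          push_cast; rw [add_mul, one_mul, Real.sin_add]
      _ ≤ |Real.sin (n * x)| * |Real.cos x| + |Real.cos (n * x)| * |Real.sin x| := by
          rw [← abs_mul, ← abs_mul]; exact abs_add_le _ _
      _ ≤ n * |Real.sin x| * 1 + 1 * |Real.sin x| := by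
          gcongr
          exacts [Real.abs_cos_le_one x, Real.abs_cos_le_one _]
      _ = (n + 1 : ℕ) * |Real.sin x| := by push_cast; ring

theorem abs_sin_int_mul_le (k : ℤ) (x : ℝ) : |Real.sin (k * x)| ≤ |(k : ℝ)| * |Real.sin x| := by
  obtain ⟨n, rfl | rfl⟩ := Int.eq_nat_or_neg k
  · simpa using abs_sin_nat_mul_le n x
  · simpa [neg_mul, Real.sin_neg] using abs_sin_nat_mul_le n x

theorem norm_cexp_I_mul_int_sub_le (k : ℤ) (a b : ℝ) :
    ‖cexp (I * ↑(a * k)) - cexp (I * ↑(b * k))‖ ≤ |(k : ℝ)| * ‖cexp (I * a) - cexp (I * b)‖ := by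
  rw [norm_cexp_I_mul_sub_cexp_I_mul, norm_cexp_I_mul_sub_cexp_I_mul,
    show (a * k - b * k) / 2 = k * ((a - b) / 2) by ring]
  nlinarith [abs_sin_int_mul_le k ((a - b) / 2), abs_nonneg (k : ℝ)]

theorem two_mul_nint_le_abs_sin (x : ℝ) : 2 * nint x ≤ |Real.sin (π * x)| := by
  have hperiod : |Real.sin (π * x)| = |Real.sin (π * (x - round x))| := by
    rw [mul_sub, mul_comm π (round x : ℝ), Real.sin_sub_int_mul_pi, abs_mul, abs_neg_one_zpow,
      one_mul]
  have hsmall : |π * (x - round x)| ≤ π / 2 := by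
    rw [abs_mul, abs_of_pos Real.pi_pos]
    nlinarith [abs_sub_round x, Real.pi_pos]
  have jordan := Real.mul_abs_le_abs_sin hsmall
  rw [abs_mul, abs_of_pos Real.pi_pos, ← mul_assoc, div_mul_cancel₀ _ Real.pi_ne_zero] at jordan
  rwa [hperiod]

section IntegerValued

variable {Ω : Type*} [MeasurableSpace Ω] {μ : Measure Ω} {X : Ω → ℝ}

theorem integrable_cexp_I_mul [IsFiniteMeasure μ] (hX : AEMeasurable X μ) (t : ℝ) :
    Integrable (fun ω ↦ cexp (I * ↑(t * X ω))) μ := by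
  refine Integrable.of_bound ?_ 1 (ae_of_all _ fun ω ↦ (norm_exp_I_mul_ofReal _).le)
  exact (Complex.measurable_exp.comp_aemeasurable
    (aemeasurable_const.mul (Complex.measurable_ofReal.comp_aemeasurable
      (hX.const_mul t)))).aestronglyMeasurable

theorem nullMeasurableSet_eq_one (hX : AEMeasurable X μ) : NullMeasurableSet {ω | X ω = 1} μ :=
  hX.nullMeasurableSet_preimage (measurableSet_singleton 1)

theorem setIntegral_abs_eq_measureReal_of_eq_one (hX : AEMeasurable X μ) :
    ∫ ω in {ω | X ω = 1}, |X ω| ∂μ = μ.real {ω | X ω = 1} := by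
  rw [setIntegral_congr_fun₀ (g := fun _ ↦ (1 : ℝ)) (nullMeasurableSet_eq_one hX)
      (fun ω (hω : X ω = 1) ↦ by simp [hω]),
    setIntegral_const, smul_eq_mul, mul_one]

theorem setIntegral_cexp_sub_of_eq_one (hX : AEMeasurable X μ) (a b : ℝ) :
    ∫ ω in {ω | X ω = 1}, (cexp (I * ↑(a * X ω)) - cexp (I * ↑(b * X ω))) ∂μ
      = μ.real {ω | X ω = 1} • (cexp (I * a) - cexp (I * b)) := by
  rw [← setIntegral_const]
  exact setIntegral_congr_fun₀ (nullMeasurableSet_eq_one hX)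
    (fun ω (hω : X ω = 1) ↦ by simp [hω])

theorem norm_setIntegral_cexp_sub_of_ne_one_le (hint : ∀ ω, ∃ k : ℤ, X ω = k)
    (hX : Integrable X μ) (a b : ℝ) :
    ‖∫ ω in {ω | X ω = 1}ᶜ, (cexp (I * ↑(a * X ω)) - cexp (I * ↑(b * X ω))) ∂μ‖
      ≤ (∫ ω, |X ω| ∂μ - μ.real {ω | X ω = 1}) * ‖cexp (I * a) - cexp (I * b)‖ := by
  have hcompl : ∫ ω in {ω | X ω = 1}ᶜ, |X ω| ∂μ = ∫ ω, |X ω| ∂μ - μ.real {ω | X ω = 1} := by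
    rw [← integral_add_compl₀ (nullMeasurableSet_eq_one hX.aemeasurable) hX.abs,
      setIntegral_abs_eq_measureReal_of_eq_one hX.aemeasurable]
    ring
  rw [← hcompl, ← integral_mul_const]
  refine norm_integral_le_of_norm_le (hX.abs.integrableOn.mul_const _) (ae_of_all _ fun ω ↦ ?_)
  obtain ⟨k, hk⟩ := hint ω
  rw [hk]
  exact norm_cexp_I_mul_int_sub_le k a b

theorem norm_integral_cexp_sub_ge [IsFiniteMeasure μ] (hint : ∀ ω, ∃ k : ℤ, X ω = k)
    (hX : Integrable X μ) (a b : ℝ) :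
    (2 * μ.real {ω | X ω = 1} - ∫ ω, |X ω| ∂μ) * ‖cexp (I * a) - cexp (I * b)‖
      ≤ ‖∫ ω, (cexp (I * ↑(a * X ω)) - cexp (I * ↑(b * X ω))) ∂μ‖ := by
  have hf : Integrable (fun ω ↦ cexp (I * ↑(a * X ω)) - cexp (I * ↑(b * X ω))) μ :=
    (integrable_cexp_I_mul hX.aemeasurable a).sub (integrable_cexp_I_mul hX.aemeasurable b)
  rw [← integral_add_compl₀ (nullMeasurableSet_eq_one hX.aemeasurable) hf,
    setIntegral_cexp_sub_of_eq_one hX.aemeasurable]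
  have hatom : ‖μ.real {ω | X ω = 1} • (cexp (I * a) - cexp (I * b))‖
      = μ.real {ω | X ω = 1} * ‖cexp (I * a) - cexp (I * b)‖ := by
    rw [norm_smul, Real.norm_of_nonneg measureReal_nonneg]
  have htriangle := norm_le_add_norm_add (μ.real {ω | X ω = 1} • (cexp (I * a) - cexp (I * b)))
    (∫ ω in {ω | X ω = 1}ᶜ, (cexp (I * ↑(a * X ω)) - cexp (I * ↑(b * X ω))) ∂μ)
  rw [hatom] at htriangle
  linarith [norm_setIntegral_cexp_sub_of_ne_one_le hint hX a b]

end IntegerValued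

theorem stmt9_general {Ω : Type*} [MeasurableSpace Ω] (μ : Measure Ω) [IsProbabilityMeasure μ]
    (X : Ω → ℝ)
    (hint : ∀ ω, ∃ k : ℤ, X ω = (k : ℝ))
    (hX : Integrable X μ)
    (hmom : ∫ ω, |X ω| ∂μ < 2 * (μ {ω | X ω = 1}).toReal)
    (φ : ℝ → ℂ)
    (hφ : ∀ t : ℝ, φ t = ∫ ω, Complex.exp (Complex.I * ((t * X ω : ℝ) : ℂ)) ∂μ) :
    ∀ x y : ℝ,
      (8 * (μ {ω | X ω = 1}).toReal - 4 * ∫ ω, |X ω| ∂μ) * nint (x - y)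
        ≤ ‖φ (2 * π * x) - φ (2 * π * y)‖ := by
  intro x y
  have hdist : 4 * nint (x - y)
      ≤ ‖cexp (I * ↑(2 * π * x)) - cexp (I * ↑(2 * π * y))‖ := by
    rw [norm_cexp_I_mul_sub_cexp_I_mul, show (2 * π * x - 2 * π * y) / 2 = π * (x - y) by ring]
    linarith [two_mul_nint_le_abs_sin (x - y)]
  rw [hφ, hφ, ← integral_sub (integrable_cexp_I_mul hX.aemeasurable _)
    (integrable_cexp_I_mul hX.aemeasurable _)]
  calc (8 * (μ {ω | X ω = 1}).toReal - 4 * ∫ ω, |X ω| ∂μ) * nint (x - y)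
      = (2 * μ.real {ω | X ω = 1} - ∫ ω, |X ω| ∂μ) * (4 * nint (x - y)) := by
        rw [measureReal_def]; ring
    _ ≤ _ := mul_le_mul_of_nonneg_left hdist (by rw [measureReal_def]; linarith)
    _ ≤ _ := norm_integral_cexp_sub_ge hint hX _ _

theorem stmt9 {Ω : Type*} [MeasurableSpace Ω] (μ : Measure Ω) [IsProbabilityMeasure μ]
    (X : Ω → ℝ) (hmeas : Measurable X)
    (hint : ∀ ω, ∃ k : ℤ, X ω = (k : ℝ))
    (hX : Integrable X μ)
    (hmom : ∫ ω, |X ω| ∂μ < 2 * (μ {ω | X ω = 1}).toReal)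
    (φ : ℝ → ℂ)
    (hφ : ∀ t : ℝ, φ t = ∫ ω, Complex.exp (Complex.I * ((t * X ω : ℝ) : ℂ)) ∂μ) :
    ∀ x y : ℝ,
      (8 * (μ {ω | X ω = 1}).toReal - 4 * ∫ ω, |X ω| ∂μ) * nint (x - y)
        ≤ ‖φ (2 * π * x) - φ (2 * π * y)‖ :=
  stmt9_general μ X hint hX hmom φ hφ
end

section
/- Let α be irrational with convergents p_n/q_n, and let k ≥ 3 with ε_k = q_k α - p_k. Then for every integer h that is a multiple of q_k with q_k ≤ h < q_{k+1}, say h = a·q_k, one has ‖hα‖ = a·‖q_k α‖, and consequently Σ_{a·q_k < q_{k+1}, a ≥ 1} 1/(a q_k (a‖q_k α‖)^b) ≤ C_b / (q_k ‖q_k α‖^b) for any 0 < b ≤ 1, where C_b = Σ_{a≥1} a^{-1-b}. -/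
open Real

/-- The denominator `q_k` of the `k`-th convergent of the continued fraction of `α`
(Mathlib indexing: `cfDen α 0 = 1`; the paper's `q_k` is `cfDen α (k-1)`). -/
noncomputable def cfDen (α : ℝ) (k : ℕ) : ℝ := (GenContFract.of α).dens k

set_option autoImplicit false in
open GenContFract in
lemma aux_contsAux_int (v : ℝ) : ∀ n : ℕ,
    (∃ m : ℤ, ((GenContFract.of v).contsAux n).a = (m : ℝ)) ∧
    (∃ m : ℤ, ((GenContFract.of v).contsAux n).b = (m : ℝ)) := by
  intro n
  induction n using Nat.strong_induction_on with
  | _ n ih =>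
    match n with
    | 0 => exact ⟨⟨1, by simp [contsAux]⟩, ⟨0, by simp [contsAux]⟩⟩
    | 1 => exact ⟨⟨⌊v⌋, by simp [contsAux, of_h_eq_floor]⟩, ⟨1, by simp [contsAux]⟩⟩
    | (n+2) =>
      obtain ⟨⟨ma, ha⟩, ⟨mb, hb⟩⟩ := ih n (by omega)
      obtain ⟨⟨ma', ha'⟩, ⟨mb', hb'⟩⟩ := ih (n+1) (by omega)
      rcases h : (GenContFract.of v).s.get? n with _ | gp
      · have hst : (GenContFract.of v).contsAux (n+2) = (GenContFract.of v).contsAux (n+1) :=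
          contsAux_stable_step_of_terminated h
        rw [hst]
        exact ⟨⟨ma', ha'⟩, ⟨mb', hb'⟩⟩
      · obtain ⟨hga, z, hgb⟩ := of_partNum_eq_one_and_exists_int_partDen_eq h
        rw [contsAux_recurrence h rfl rfl]
        refine ⟨⟨z * ma' + ma, ?_⟩, ⟨z * mb' + mb, ?_⟩⟩ <;>
          · simp only [hga, hgb, ha, ha', hb, hb']
            push_cast
            ring

lemma aux_not_term (α : ℝ) (hα : Irrational α) (n : ℕ) :
    ¬(GenContFract.of α).TerminatedAt n := by
  intro h
  obtain ⟨q, hq⟩ := GenContFract.exists_rat_eq_of_terminates ⟨n, h⟩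
  exact hα ⟨q, hq.symm⟩

theorem stmt14 (α : ℝ) (hα : Irrational α) (k : ℕ) (hk : 2 ≤ k)
    (b : ℝ) (hb0 : 0 < b) (hb1 : b ≤ 1) :
    (∀ a : ℕ, 1 ≤ a → (a : ℝ) * cfDen α k < cfDen α (k + 1) →
      nint ((a : ℝ) * cfDen α k * α) = (a : ℝ) * nint (cfDen α k * α))
    ∧ (∑' a : ℕ, (if 1 ≤ a ∧ (a : ℝ) * cfDen α k < cfDen α (k + 1)
          then 1 / ((a : ℝ) * cfDen α k * ((a : ℝ) * nint (cfDen α k * α)) ^ b)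
          else 0))
        ≤ (∑' a : ℕ, 1 / ((a : ℝ) + 1) ^ (1 + b))
            / (cfDen α k * nint (cfDen α k * α) ^ b) := by
  classical
  have hterm : ∀ n, ¬(GenContFract.of α).TerminatedAt n := aux_not_term α hα
  have hfib : (Nat.fib (k+1) : ℝ) ≤ cfDen α k :=
    GenContFract.succ_nth_fib_le_of_nth_den (Or.inr (hterm _))
  have hq2 : (2:ℝ) ≤ cfDen α k := by
    refine le_trans ?_ hfib
    have h2 : 2 ≤ Nat.fib (k+1) := by
      calc 2 = Nat.fib 3 := rfl
        _ ≤ Nat.fib (k+1) := Nat.fib_mono (by omega)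
    exact_mod_cast h2
  have hq0 : (0:ℝ) < cfDen α k := by linarith
  have hq'0 : (0:ℝ) < cfDen α (k+1) :=
    lt_of_lt_of_le hq0 GenContFract.of_den_mono
  -- the numerator is an integer
  obtain ⟨m, hm0⟩ := (aux_contsAux_int α (k+1)).1
  have hm : (GenContFract.of α).nums k = (m : ℝ) := by
    rw [GenContFract.num_eq_conts_a, GenContFract.nth_cont_eq_succ_nth_contAux]
    exact hm0
  -- the approximation property
  have habs : |α - (GenContFract.of α).convs k| ≤ 1 / (cfDen α k * cfDen α (k+1)) :=
    GenContFract.abs_sub_convs_le (hterm k)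
  have hqp : |cfDen α k * α - (m:ℝ)| ≤ 1 / cfDen α (k+1) := by
    have h1 : cfDen α k * α - (m:ℝ) = cfDen α k * (α - (GenContFract.of α).convs k) := by
      rw [GenContFract.conv_eq_num_div_den, hm]
      have : (GenContFract.of α).dens k = cfDen α k := rfl
      rw [this]
      field_simp
    rw [h1, abs_mul, abs_of_pos hq0]
    calc cfDen α k * |α - (GenContFract.of α).convs k|
        ≤ cfDen α k * (1 / (cfDen α k * cfDen α (k+1))) :=
          mul_le_mul_of_nonneg_left habs hq0.le
      _ = 1 / cfDen α (k+1) := by field_simp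
  set r : ℤ := round (cfDen α k * α) with hr
  set t : ℝ := nint (cfDen α k * α) with htdef
  have ht : t = |cfDen α k * α - (r:ℝ)| := rfl
  have ht_le : t ≤ 1 / cfDen α (k+1) := by
    rw [ht]
    exact le_trans (round_le _ m) hqp
  have ht_pos : 0 < t := by
    rcases (abs_nonneg (cfDen α k * α - (r:ℝ))).lt_or_eq with h | h
    · exact ht ▸ h
    · exfalso
      have heq : cfDen α k * α = (r:ℝ) := by
        have h0 : |cfDen α k * α - (r:ℝ)| = 0 := h.symm
        rw [abs_eq_zero] at h0
        linarith
      obtain ⟨qr, hqr⟩ := GenContFract.exists_rat_eq_nth_den (v := α) (n := k)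
      have hqrr : cfDen α k = (qr:ℝ) := hqr
      have hqrne : (qr:ℝ) ≠ 0 := by rw [← hqrr]; intro h'; rw [h'] at hq2; linarith
      refine hα ⟨(r:ℚ) / qr, ?_⟩
      have hαeq : α = (r:ℝ) / (qr:ℝ) := by
        rw [eq_div_iff hqrne, mul_comm]
        rw [hqrr] at heq
        exact heq
      rw [hαeq]
      push_cast
      ring
  -- Part 1
  have key : ∀ a : ℕ, 1 ≤ a → (a : ℝ) * cfDen α k < cfDen α (k + 1) →
      nint ((a : ℝ) * cfDen α k * α) = (a : ℝ) * t := by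
    intro a ha haq
    have ha0 : (0:ℝ) < (a:ℝ) := by exact_mod_cast ha
    have hlt : (a:ℝ) * t < 1/2 := by
      calc (a:ℝ) * t ≤ (a:ℝ) * (1 / cfDen α (k+1)) :=
            mul_le_mul_of_nonneg_left ht_le ha0.le
        _ = (a:ℝ) / cfDen α (k+1) := by ring
        _ < 1 / cfDen α k := by
            rw [div_lt_div_iff₀ hq'0 hq0]
            linarith
        _ ≤ 1/2 := by
            rw [div_le_div_iff₀ hq0 (by norm_num : (0:ℝ) < 2)]
            linarith
    have hxr : |(a:ℝ) * cfDen α k * α - ((a:ℤ) * r : ℤ)| = (a:ℝ) * t := by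
      have h1 : (a:ℝ) * cfDen α k * α - ((a:ℤ) * r : ℤ)
          = (a:ℝ) * (cfDen α k * α - (r:ℝ)) := by push_cast; ring
      rw [h1, abs_mul, abs_of_pos ha0, ← ht]
    have hR : round ((a:ℝ) * cfDen α k * α) = (a:ℤ) * r := by
      have h1 : |(a:ℝ) * cfDen α k * α - round ((a:ℝ) * cfDen α k * α)|
          ≤ |(a:ℝ) * cfDen α k * α - ((a:ℤ) * r : ℤ)| := round_le _ _
      have h2 : |(round ((a:ℝ) * cfDen α k * α) : ℝ) - ((a:ℤ) * r : ℤ)| < 1 := by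
        have htri : |(round ((a:ℝ) * cfDen α k * α) : ℝ) - ((a:ℤ) * r : ℤ)|
            ≤ |(round ((a:ℝ) * cfDen α k * α) : ℝ) - (a:ℝ) * cfDen α k * α|
              + |(a:ℝ) * cfDen α k * α - ((a:ℤ) * r : ℤ)| := abs_sub_le _ _ _
        rw [abs_sub_comm ((round ((a:ℝ) * cfDen α k * α) : ℝ)) ((a:ℝ) * cfDen α k * α)] at htri
        rw [hxr] at h1 htri
        linarith
      have h3 : |round ((a:ℝ) * cfDen α k * α) - (a:ℤ) * r| < 1 := by
        exact_mod_cast h2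
      rw [abs_lt] at h3
      omega
    show |(a:ℝ) * cfDen α k * α - round ((a:ℝ) * cfDen α k * α)| = (a:ℝ) * t
    rw [hR]
    exact hxr
  refine ⟨key, ?_⟩
  -- Part 2
  have htb : 0 < t ^ b := Real.rpow_pos_of_pos ht_pos b
  set D : ℝ := cfDen α k * t ^ b with hD
  have hD0 : 0 < D := mul_pos hq0 htb
  set f : ℕ → ℝ := fun a => if 1 ≤ a ∧ (a : ℝ) * cfDen α k < cfDen α (k + 1)
      then 1 / ((a : ℝ) * cfDen α k * ((a : ℝ) * t) ^ b) else 0 with hf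
  set g : ℕ → ℝ := fun a => 1 / (a:ℝ) ^ (1 + b) * (1 / D) with hgdef
  have hfg : ∀ a, f a ≤ g a := by
    intro a
    by_cases hc : 1 ≤ a ∧ (a : ℝ) * cfDen α k < cfDen α (k + 1)
    · have ha0 : (0:ℝ) < (a:ℝ) := by exact_mod_cast hc.1
      have hmul : ((a:ℝ) * t) ^ b = (a:ℝ) ^ b * t ^ b :=
        Real.mul_rpow ha0.le ht_pos.le
      have hab : (a:ℝ) ^ (1 + b) = (a:ℝ) * (a:ℝ) ^ b := by
        rw [Real.rpow_add ha0, Real.rpow_one]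
      have : f a = g a := by
        simp only [hf, hgdef, if_pos hc]
        rw [hmul, hab, div_mul_div_comm, one_mul]
        congr 1
        ring
      exact this.le
    · simp only [hf, hgdef, if_neg hc]
      have h1 : (0:ℝ) ≤ (a:ℝ) ^ (1 + b) := Real.rpow_nonneg (Nat.cast_nonneg a) _
      positivity
  have hsum1 : Summable (fun a : ℕ => 1 / (a:ℝ) ^ (1 + b)) :=
    Real.summable_one_div_nat_rpow.mpr (by linarith)
  have hg : Summable g := hsum1.mul_right _
  have hfnn : ∀ a, 0 ≤ f a := by
    intro a
    simp only [hf]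
    split
    · apply div_nonneg zero_le_one
      apply mul_nonneg (mul_nonneg (Nat.cast_nonneg a) hq0.le)
      exact Real.rpow_nonneg (mul_nonneg (Nat.cast_nonneg a) ht_pos.le) _
    · exact le_rfl
  have hfs : Summable f := Summable.of_nonneg_of_le hfnn hfg hg
  have hshift : (∑' a : ℕ, 1 / (a:ℝ) ^ (1 + b))
      = ∑' a : ℕ, 1 / ((a : ℝ) + 1) ^ (1 + b) := by
    rw [Summable.tsum_eq_zero_add hsum1]
    have h0 : 1 / ((0:ℕ):ℝ) ^ (1 + b) = 0 := by
      rw [Nat.cast_zero, Real.zero_rpow (by linarith : (1:ℝ) + b ≠ 0), div_zero]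
    rw [h0, zero_add]
    exact tsum_congr fun n => by push_cast; ring_nf
  calc (∑' a : ℕ, f a) ≤ ∑' a : ℕ, g a := Summable.tsum_le_tsum hfg hfs hg
    _ = (∑' a : ℕ, 1 / (a:ℝ) ^ (1 + b)) * (1 / D) := tsum_mul_right
    _ = (∑' a : ℕ, 1 / ((a : ℝ) + 1) ^ (1 + b)) * (1 / D) := by rw [hshift]
    _ = (∑' a : ℕ, 1 / ((a : ℝ) + 1) ^ (1 + b)) / D := mul_one_div _ _
end

section
/- Let α be irrational, let n₁ < n₂ < ... be integers with |n_k| ≤ K·ψ(k) for a nondecreasing ψ with ψ(k) → ∞, and suppose ‖qα‖ ≤ C q^{-γ} with |qα - p| = ‖qα‖. If N satisfies ψ(N) < q^γ/(3CK), then none of the points {n_k α}, k = 1,...,N, lies in the interval [1/(3q), 2/(3q)], hence D_N({n_k α}) ≥ 1/(3q). -/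
/-!
Write `q α = p + δ` with `|δ| = ‖q α‖ ≤ C q^{-γ}`. For `k ≤ N` the growth bound gives
`|n_k δ| ≤ K ψ(N) C q^{-γ} < 1/3`, so `q {n_k α} = j + n_k δ` with `j` an integer lies within `1/3`
of an integer, and hence not in `[1/3, 2/3]`. The window `[1/(3q), 2/(3q))` therefore contains none of
the first `N` points, and its length `1/(3q)` bounds the discrepancy from below.
-/

open Filter Real
open scoped Classical

/-- The discrepancy `D_N` of the first `N` terms of the sequence `x` modulo one. -/
noncomputable def disc (N : ℕ) (x : ℕ → ℝ) : ℝ :=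
  ⨆ p : {p : ℝ × ℝ // 0 ≤ p.1 ∧ p.1 < p.2 ∧ p.2 ≤ 1},
    |(∑ k ∈ Finset.Icc 1 N,
        if (p : ℝ × ℝ).1 ≤ Int.fract (x k) ∧ Int.fract (x k) < (p : ℝ × ℝ).2
        then (1 : ℝ) else 0) / N - ((p : ℝ × ℝ).2 - (p : ℝ × ℝ).1)|

section Discrepancy

variable (N : ℕ) (x : ℕ → ℝ)

lemma abs_count_div_sub_le_one {a b : ℝ} (ha : 0 ≤ a) (hab : a < b) (hb : b ≤ 1) :
    |(∑ k ∈ Finset.Icc 1 N,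
        if a ≤ Int.fract (x k) ∧ Int.fract (x k) < b then (1 : ℝ) else 0) / N - (b - a)| ≤ 1 := by
  set S := ∑ k ∈ Finset.Icc 1 N,
    if a ≤ Int.fract (x k) ∧ Int.fract (x k) < b then (1 : ℝ) else 0
  have hS0 : 0 ≤ S := Finset.sum_nonneg fun _ _ => by split_ifs <;> norm_num
  have hSN : S ≤ N := by
    calc S ≤ ∑ _k ∈ Finset.Icc 1 N, (1 : ℝ) :=
          Finset.sum_le_sum fun _ _ => by split_ifs <;> norm_num
      _ = N := by simp
  have h0 : 0 ≤ S / N := div_nonneg hS0 (Nat.cast_nonneg N)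
  have h1 : S / N ≤ 1 := div_le_one_of_le₀ hSN (Nat.cast_nonneg N)
  rw [abs_le]
  constructor <;> linarith

lemma abs_count_div_sub_le_disc {a b : ℝ} (ha : 0 ≤ a) (hab : a < b) (hb : b ≤ 1) :
    |(∑ k ∈ Finset.Icc 1 N,
        if a ≤ Int.fract (x k) ∧ Int.fract (x k) < b then (1 : ℝ) else 0) / N - (b - a)|
      ≤ disc N x := by
  unfold disc
  refine (le_ciSup ⟨1, ?_⟩
    (⟨(a, b), ha, hab, hb⟩ : {p : ℝ × ℝ // 0 ≤ p.1 ∧ p.1 < p.2 ∧ p.2 ≤ 1})).trans' le_rfl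
  rintro _ ⟨⟨⟨a', b'⟩, ha', hab', hb'⟩, rfl⟩
  exact abs_count_div_sub_le_one N x ha' hab' hb'

lemma sub_le_disc_of_forall_not_mem {a b : ℝ} (ha : 0 ≤ a) (hab : a < b) (hb : b ≤ 1)
    (hempty : ∀ k ∈ Finset.Icc 1 N, ¬ (a ≤ Int.fract (x k) ∧ Int.fract (x k) < b)) :
    b - a ≤ disc N x := by
  have hsum : (∑ k ∈ Finset.Icc 1 N,
      if a ≤ Int.fract (x k) ∧ Int.fract (x k) < b then (1 : ℝ) else 0) = 0 :=
    Finset.sum_eq_zero fun k hk => if_neg (hempty k hk)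
  have := abs_count_div_sub_le_disc N x ha hab hb
  rwa [hsum, zero_div, zero_sub, abs_neg, abs_of_pos (sub_pos.mpr hab)] at this

end Discrepancy

lemma fract_mul_not_mem_Icc {α : ℝ} {q : ℕ} (hq : 0 < q) (p m : ℤ)
    (hsmall : |(m : ℝ) * ((q : ℝ) * α - p)| < 1 / 3) :
    Int.fract ((m : ℝ) * α) ∉ Set.Icc (1 / (3 * (q : ℝ))) (2 / (3 * (q : ℝ))) := by
  rintro ⟨hlo, hhi⟩
  have hq0 : (0 : ℝ) < q := by exact_mod_cast hq
  set j : ℤ := m * p - q * ⌊(m : ℝ) * α⌋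
  have hqx : (q : ℝ) * Int.fract ((m : ℝ) * α) = j + m * ((q : ℝ) * α - p) := by
    rw [Int.fract]
    push_cast [j]
    ring
  have hx1 : 1 / 3 ≤ (q : ℝ) * Int.fract ((m : ℝ) * α) := by
    calc (1 : ℝ) / 3 = q * (1 / (3 * q)) := by field_simp
      _ ≤ _ := mul_le_mul_of_nonneg_left hlo hq0.le
  have hx2 : (q : ℝ) * Int.fract ((m : ℝ) * α) ≤ 2 / 3 := by
    calc _ ≤ (q : ℝ) * (2 / (3 * q)) := mul_le_mul_of_nonneg_left hhi hq0.le
      _ = 2 / 3 := by field_simp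
  rw [abs_lt] at hsmall
  have hj0 : (0 : ℝ) < j := by linarith
  have hj1 : (j : ℝ) < 1 := by linarith
  have : (0 : ℤ) < j := by exact_mod_cast hj0
  have : j < 1 := by exact_mod_cast hj1
  omega

lemma abs_mul_lt_one_third {x δ K C s q γ : ℝ} (hK : 0 < K) (hC : 0 < C) (hq : 0 < q)
    (hx : |x| ≤ K * s) (hδ : |δ| ≤ C * q ^ (-γ)) (hs : s < q ^ γ / (3 * C * K)) :
    |x * δ| < 1 / 3 := by
  have hpow : q ^ γ * q ^ (-γ) = 1 := by rw [← rpow_add hq]; simp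
  have hKs : 0 ≤ K * s := (abs_nonneg x).trans hx
  calc |x * δ| ≤ (K * s) * (C * q ^ (-γ)) := by
        rw [abs_mul]; exact mul_le_mul hx hδ (abs_nonneg _) hKs
    _ < (K * (q ^ γ / (3 * C * K))) * (C * q ^ (-γ)) := by
        gcongr
    _ = 1 / 3 := by
        field_simp
        linear_combination hpow

theorem stmt16_general (α : ℝ) (n : ℕ → ℤ)
    (ψ : ℕ → ℝ) (hψmono : Monotone ψ)
    (K : ℝ) (hK : 0 < K) (hn : ∀ k : ℕ, 1 ≤ k → |(n k : ℝ)| ≤ K * ψ k)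
    (γ C : ℝ) (hC : 0 < C)
    (q : ℕ) (p : ℤ) (hq : 1 ≤ q)
    (hp : |(q : ℝ) * α - p| = nint ((q : ℝ) * α))
    (hqα : nint ((q : ℝ) * α) ≤ C * (q : ℝ) ^ (-γ))
    (N : ℕ) (hψN : ψ N < (q : ℝ) ^ γ / (3 * C * K)) :
    (∀ k : ℕ, 1 ≤ k → k ≤ N →
      Int.fract ((n k : ℝ) * α) ∉ Set.Icc (1 / (3 * (q : ℝ))) (2 / (3 * (q : ℝ))))
    ∧ 1 / (3 * (q : ℝ)) ≤ disc N (fun k => (n k : ℝ) * α) := by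
  have hq0 : (0 : ℝ) < q := by exact_mod_cast hq
  have hδ : |(q : ℝ) * α - p| ≤ C * (q : ℝ) ^ (-γ) := hp ▸ hqα
  have hgap : ∀ k : ℕ, 1 ≤ k → k ≤ N →
      Int.fract ((n k : ℝ) * α) ∉ Set.Icc (1 / (3 * (q : ℝ))) (2 / (3 * (q : ℝ))) :=
    fun k hk hkN => fract_mul_not_mem_Icc hq p (n k) <| abs_mul_lt_one_third hK hC hq0
      ((hn k hk).trans (mul_le_mul_of_nonneg_left (hψmono hkN) hK.le)) hδ hψN
  refine ⟨hgap, ?_⟩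
  have hq1 : (1 : ℝ) ≤ q := by exact_mod_cast hq
  have hwindow := sub_le_disc_of_forall_not_mem N (fun k => (n k : ℝ) * α)
    (a := 1 / (3 * q)) (b := 2 / (3 * q)) (by positivity)
    (by gcongr; norm_num) (by rw [div_le_one (by positivity)]; linarith)
    fun k hk hmem => hgap k (Finset.mem_Icc.mp hk).1 (Finset.mem_Icc.mp hk).2 ⟨hmem.1, hmem.2.le⟩
  calc 1 / (3 * (q : ℝ)) = 2 / (3 * q) - 1 / (3 * q) := by ring
    _ ≤ _ := hwindow

theorem stmt16 (α : ℝ) (hα : Irrational α)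
    (n : ℕ → ℤ) (hmono : StrictMono n)
    (ψ : ℕ → ℝ) (hψpos : ∀ k, 0 < ψ k) (hψmono : Monotone ψ)
    (hψtop : Filter.Tendsto ψ Filter.atTop Filter.atTop)
    (K : ℝ) (hK : 0 < K) (hn : ∀ k : ℕ, 1 ≤ k → |(n k : ℝ)| ≤ K * ψ k)
    (γ C : ℝ) (hγ : 1 ≤ γ) (hC : 0 < C)
    (q : ℕ) (p : ℤ) (hq : 1 ≤ q)
    (hp : |(q : ℝ) * α - p| = nint ((q : ℝ) * α))
    (hqα : nint ((q : ℝ) * α) ≤ C * (q : ℝ) ^ (-γ))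
    (N : ℕ) (hN : 1 ≤ N) (hψN : ψ N < (q : ℝ) ^ γ / (3 * C * K)) :
    (∀ k : ℕ, 1 ≤ k → k ≤ N →
      Int.fract ((n k : ℝ) * α) ∉ Set.Icc (1 / (3 * (q : ℝ))) (2 / (3 * (q : ℝ))))
    ∧ 1 / (3 * (q : ℝ)) ≤ disc N (fun k => (n k : ℝ) * α) :=
  stmt16_general α n ψ hψmono K hK hn γ C hC q p hq hp hqα N hψN
end

section
/- Let X₁, X₂, ... be i.i.d. random variables with characteristic function φ satisfying |1 - φ(x)| ≤ c|x|^β for all x ∈ ℝ, with 0 < β ≤ 2, c > 0, and let S_n = Σ_{j≤n} X_j. Then there is a universal constant A > 0 such that P(|S_n| > t·n^{1/β}) ≤ A·c·t^{-β} for all t > 0 and all n ≥ 1. -/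
open MeasureTheory ProbabilityTheory Real

/-!
The characteristic function of `S n` is `φ ^ n`, and `‖1 - z ^ n‖ ≤ n ‖1 - z‖` for `‖z‖ ≤ 1`, so
`‖1 - φ_{S n}(s)‖ ≤ n c |s| ^ β`. The truncation inequality
`P(|Y| > r) ≤ (r / 2) ‖∫_{-2/r}^{2/r} (1 - φ_Y)‖` then gives `P(|S n| > r) ≤ 2 ^ (β + 1) n c r ^ (-β)`,
and at `r = t n ^ (1 / β)` the factor `n` cancels; `β ≤ 2` bounds `2 ^ (β + 1)` by `8`.
-/

lemma norm_one_sub_pow_le {R : Type*} [SeminormedRing R] [NormOneClass R] {z : R}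
    (hz : ‖z‖ ≤ 1) (n : ℕ) : ‖1 - z ^ n‖ ≤ n * ‖1 - z‖ := by
  rw [← mul_neg_geom_sum]
  calc ‖(1 - z) * ∑ i ∈ Finset.range n, z ^ i‖
      ≤ ‖1 - z‖ * ∑ i ∈ Finset.range n, ‖z ^ i‖ := by
        grw [norm_mul_le, norm_sum_le]
    _ ≤ ‖1 - z‖ * ∑ _i ∈ Finset.range n, (1 : ℝ) := by
        gcongr with i
        exact (norm_pow_le z i).trans (pow_le_one₀ (norm_nonneg z) hz)
    _ = n * ‖1 - z‖ := by simp [mul_comm]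

lemma measureReal_abs_gt_le_of_norm_one_sub_charFun_le {ν : Measure ℝ} [IsProbabilityMeasure ν]
    {r B : ℝ} (hr : 0 < r) (hB : ∀ s, |s| ≤ 2 * r⁻¹ → ‖1 - charFun ν s‖ ≤ B) :
    ν.real {x | r < |x|} ≤ 2 * B := by
  have hr' : 0 < 2 * r⁻¹ := by positivity
  calc ν.real {x | r < |x|}
      ≤ 2⁻¹ * r * ‖∫ s in (-2 * r⁻¹)..(2 * r⁻¹), 1 - charFun ν s‖ :=
        measureReal_abs_gt_le_integral_charFun hr
    _ ≤ 2⁻¹ * r * (B * |2 * r⁻¹ - -2 * r⁻¹|) := by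
        gcongr
        refine intervalIntegral.norm_integral_le_of_norm_le_const fun s hs => hB s ?_
        rw [Set.uIoc_of_le (by linarith)] at hs
        exact abs_le.2 ⟨by linarith [hs.1], hs.2⟩
    _ = 2 * B := by
        rw [abs_of_pos (by linarith)]
        field_simp
        ring

lemma charFun_map_finsetSum_eq_pow {Ω : Type*} {mΩ : MeasurableSpace Ω} {μ : Measure Ω}
    [IsProbabilityMeasure μ] {ι : Type*} {X : ι → Ω → ℝ} (hX : ∀ i, Measurable (X i))
    (hind : iIndepFun X μ) {i₀ : ι} (hid : ∀ i, IdentDistrib (X i) (X i₀) μ μ) (s : Finset ι) :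
    charFun (μ.map fun ω => ∑ i ∈ s, X i ω) = charFun (μ.map (X i₀)) ^ s.card := by
  rw [(hind.restrict s).charFun_map_fun_finsetSum_eq_prod fun i _ => (hX i).aemeasurable]
  simp [(hid _).map_eq]

lemma charFun_map_eq_integral_exp {Ω : Type*} {mΩ : MeasurableSpace Ω} {μ : Measure Ω}
    {Y : Ω → ℝ} (hY : AEMeasurable Y μ) (t : ℝ) :
    charFun (μ.map Y) t = ∫ ω, Complex.exp (Complex.I * ((t * Y ω : ℝ) : ℂ)) ∂μ := by
  rw [charFun_apply_real, integral_map hY (by fun_prop)]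
  congr with ω
  push_cast
  ring_nf

lemma measureReal_abs_gt_le_of_norm_one_sub_charFun_le_rpow {ν : Measure ℝ}
    [IsProbabilityMeasure ν] {c β r : ℝ} (hβ : 0 ≤ β) (hr : 0 < r)
    (h : ∀ s, ‖1 - charFun ν s‖ ≤ c * |s| ^ β) :
    ν.real {x | r < |x|} ≤ 2 ^ (β + 1) * c * r ^ (-β) := by
  have hc : 0 ≤ c := by simpa using (norm_nonneg _).trans (h 1)
  calc ν.real {x | r < |x|} ≤ 2 * (c * (2 * r⁻¹) ^ β) :=
        measureReal_abs_gt_le_of_norm_one_sub_charFun_le hr fun s hs => (h s).trans (by gcongr)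
    _ = 2 ^ (β + 1) * c * r ^ (-β) := by
        rw [mul_rpow zero_le_two (by positivity), inv_rpow hr.le, rpow_add_one two_ne_zero, rpow_neg hr.le]
        ring

theorem stmt18 :
    ∃ A : ℝ, 0 < A ∧
      ∀ (Ω : Type) (_ : MeasurableSpace Ω) (μ : Measure Ω), IsProbabilityMeasure μ →
        ∀ (X : ℕ → Ω → ℝ), (∀ i, Measurable (X i)) →
          iIndepFun X μ →
          (∀ i, IdentDistrib (X i) (X 0) μ μ) →
          ∀ (φ : ℝ → ℂ),
            (∀ t : ℝ, φ t = ∫ ω, Complex.exp (Complex.I * ((t * X 0 ω : ℝ) : ℂ)) ∂μ) →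
            ∀ (c β : ℝ), 0 < c → 0 < β → β ≤ 2 →
              (∀ x : ℝ, ‖1 - φ x‖ ≤ c * |x| ^ β) →
              ∀ (S : ℕ → Ω → ℝ), (∀ n ω, S n ω = ∑ j ∈ Finset.Icc 1 n, X j ω) →
                ∀ (t : ℝ), 0 < t → ∀ (n : ℕ), 1 ≤ n →
                  (μ {ω | t * (n : ℝ) ^ (1 / β) < |S n ω|}).toReal
                    ≤ A * c * t ^ (-β) := by
  refine ⟨8, by norm_num, fun Ω _ μ _ X hX hind hid φ hφ c β _ hβ hβ2 hφc S hS t ht n hn => ?_⟩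
  have hφ_eq : φ = charFun (μ.map (X 0)) :=
    funext fun s => (hφ s).trans (charFun_map_eq_integral_exp (hX 0).aemeasurable s).symm
  have hS_eq : S n = fun ω => ∑ j ∈ Finset.Icc 1 n, X j ω := funext (hS n)
  have hSm : Measurable (S n) := hS_eq ▸ by fun_prop
  have := Measure.isProbabilityMeasure_map (μ := μ) (hX 0).aemeasurable
  have := Measure.isProbabilityMeasure_map (μ := μ) hSm.aemeasurable
  have hSn : ∀ s, ‖1 - charFun (μ.map (S n)) s‖ ≤ (n * c) * |s| ^ β := fun s => by
    rw [hS_eq, charFun_map_finsetSum_eq_pow hX hind hid, Nat.card_Icc, Nat.add_sub_cancel,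
      Pi.pow_apply, ← hφ_eq, mul_assoc]
    grw [norm_one_sub_pow_le (hφ_eq ▸ norm_charFun_le_one s) n, hφc s]
  have hn0 : (0 : ℝ) < n := by exact_mod_cast hn
  have hscale : ((n : ℝ) ^ (1 / β)) ^ (-β) = (n : ℝ)⁻¹ := by
    rw [← rpow_mul hn0.le, one_div, inv_mul_eq_div, neg_div_self hβ.ne', rpow_neg_one]
  have htwo : (2 : ℝ) ^ (β + 1) ≤ 8 := by
    calc (2 : ℝ) ^ (β + 1) ≤ 2 ^ (3 : ℝ) := rpow_le_rpow_of_exponent_le one_le_two (by linarith)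
      _ = 8 := by norm_num
  calc (μ {ω | t * (n : ℝ) ^ (1 / β) < |S n ω|}).toReal
      = (μ.map (S n)).real {x | t * (n : ℝ) ^ (1 / β) < |x|} :=
        (map_measureReal_apply hSm (measurableSet_lt measurable_const measurable_abs)).symm
    _ ≤ 2 ^ (β + 1) * (n * c) * (t * (n : ℝ) ^ (1 / β)) ^ (-β) :=
        measureReal_abs_gt_le_of_norm_one_sub_charFun_le_rpow hβ.le (by positivity) hSn
    _ = 2 ^ (β + 1) * c * t ^ (-β) := by
        rw [mul_rpow ht.le (by positivity), hscale]
        field_simp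
    _ ≤ 8 * c * t ^ (-β) := by gcongr
end
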